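/- arXiv:2008.02568 — 6 statements merged into one kernel-verified Lean document; each statement's English description precedes it below -/
import Mathlib

section
/- Let E be a Polish space, F a separable metric space, X a random element in E and T : E → F Borel measurable. Suppose there exist a measurable space G, random elements Y in G and Z in F defined on a common probability space such that (P2) Y and Z are independent, and a measurable map Ψ : G × F → E such that (P3) T(Ψ(Y,Z)) = Z almost surely and (P4) Ψ(Y,Z) has the same law as X. Then the map p defined by p(A,z) := P(Ψ(Y,z) ∈ A), for Borel A ⊆ E and z ∈ F, is a regular conditional probability of X given T(X). -/
open MeasureTheory Filter Topology BoundedContinuousFunction ProbabilityTheory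

/-- A regular conditional probability of `X` given `ξ`:
(R1) each `p z` is a probability measure, (R2) `z ↦ p z A` is measurable,
(R3) the disintegration identity holds. -/
structure IsRCP {Ω E F : Type*} [MeasurableSpace Ω] [MeasurableSpace E] [MeasurableSpace F]
    (P : Measure Ω) (X : Ω → E) (ξ : Ω → F) (p : F → Measure E) : Prop where
  isProb : ∀ z : F, IsProbabilityMeasure (p z)
  meas : ∀ A : Set E, MeasurableSet A → Measurable fun z => p z A
  disint : ∀ (A : Set E) (B : Set F), MeasurableSet A → MeasurableSet B →
    P {ω | X ω ∈ A ∧ ξ ω ∈ B} = ∫⁻ z in B, p z A ∂(P.map ξ)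

/-! Since `Y ⟂ Z`, the joint law of `(Y, Z)` is the product of the marginals, so by Fubini
`P(Ψ(Y,Z) ∈ A, Z ∈ B) = ∫_B P(Ψ(Y,z) ∈ A) dP^Z(z)`. The hypotheses `T(Ψ(Y,Z)) = Z` a.s. and
`Ψ(Y,Z) ~ X` turn the left side into `P(X ∈ A, T X ∈ B)` and `P^Z` into the law of `T X`. -/

namespace ProbabilityTheory

variable {Ω G F : Type*} [MeasurableSpace Ω] [MeasurableSpace G] [MeasurableSpace F]
  {P : Measure Ω} {Y : Ω → G} {Z : Ω → F} {s : Set (G × F)}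

lemma measure_setOf_prodMk_mem_eq_map (hY : Measurable Y) (hs : MeasurableSet s) (z : F) :
    P {ω | (Y ω, z) ∈ s} = P.map Y ((fun y => (y, z)) ⁻¹' s) :=
  (Measure.map_apply hY (measurable_prodMk_right hs)).symm

lemma measurable_measure_setOf_prodMk_mem [IsFiniteMeasure P] (hY : Measurable Y)
    (hs : MeasurableSet s) : Measurable fun z => P {ω | (Y ω, z) ∈ s} := by
  simp_rw [measure_setOf_prodMk_mem_eq_map hY hs]
  exact measurable_measure_prodMk_right hs

lemma IndepFun.measure_prodMk_mem_eq_lintegral [IsFiniteMeasure P] (hindep : IndepFun Y Z P)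
    (hY : Measurable Y) (hZ : Measurable Z) (hs : MeasurableSet s) :
    P {ω | (Y ω, Z ω) ∈ s} = ∫⁻ z, P {ω | (Y ω, z) ∈ s} ∂(P.map Z) := by
  change P ((fun ω => (Y ω, Z ω)) ⁻¹' s) = _
  rw [← Measure.map_apply (hY.prodMk hZ) hs,
    hindep.map_prod_eq_prod_map_map hY.aemeasurable hZ.aemeasurable, Measure.prod_apply_symm hs]
  simp_rw [measure_setOf_prodMk_mem_eq_map hY hs]

lemma IndepFun.measure_prodMk_mem_and_mem_eq_setLIntegral [IsFiniteMeasure P]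
    (hindep : IndepFun Y Z P) (hY : Measurable Y) (hZ : Measurable Z) (hs : MeasurableSet s)
    {B : Set F} (hB : MeasurableSet B) :
    P {ω | (Y ω, Z ω) ∈ s ∧ Z ω ∈ B} = ∫⁻ z in B, P {ω | (Y ω, z) ∈ s} ∂(P.map Z) := by
  rw [← lintegral_indicator hB]
  refine (hindep.measure_prodMk_mem_eq_lintegral hY hZ (hs.inter (measurable_snd hB))).trans
    (lintegral_congr fun z => ?_)
  by_cases hz : z ∈ B <;> simp [hz]

end ProbabilityTheory

theorem stmt1_general {Ω E F G : Type*} [MeasurableSpace Ω] [MeasurableSpace E] [MeasurableSpace F]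
    [MeasurableSpace G]
    (P : Measure Ω) [IsProbabilityMeasure P]
    (X : Ω → E) (hX : Measurable X) (T : E → F) (hT : Measurable T)
    (Y : Ω → G) (Z : Ω → F) (hY : Measurable Y) (hZ : Measurable Z)
    (hindep : IndepFun Y Z P)
    (Ψ : G × F → E) (hΨ : Measurable Ψ)
    (hTZ : ∀ᵐ ω ∂P, T (Ψ (Y ω, Z ω)) = Z ω)
    (hlaw : P.map (fun ω => Ψ (Y ω, Z ω)) = P.map X) :
    IsRCP P X (T ∘ X) (fun z => P.map fun ω => Ψ (Y ω, z)) := by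
  have hΨY (z : F) : Measurable fun ω => Ψ (Y ω, z) := hΨ.comp (hY.prodMk measurable_const)
  have hΨYZ : Measurable fun ω => Ψ (Y ω, Z ω) := hΨ.comp (hY.prodMk hZ)
  have hp {A : Set E} (hA : MeasurableSet A) (z : F) :
      (P.map fun ω => Ψ (Y ω, z)) A = P {ω | (Y ω, z) ∈ Ψ ⁻¹' A} :=
    Measure.map_apply (hΨY z) hA
  have hlaw_TX : P.map (T ∘ X) = P.map Z := by
    rw [← Measure.map_map hT hX, ← hlaw, Measure.map_map hT hΨYZ]
    exact Measure.map_congr hTZ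
  refine ⟨fun z => Measure.isProbabilityMeasure_map (hΨY z).aemeasurable, fun A hA => ?_,
    fun A B hA hB => ?_⟩
  · simp_rw [hp hA]
    exact measurable_measure_setOf_prodMk_mem hY (hΨ hA)
  · calc P {ω | X ω ∈ A ∧ (T ∘ X) ω ∈ B}
        = P {ω | Ψ (Y ω, Z ω) ∈ A ∧ T (Ψ (Y ω, Z ω)) ∈ B} := by
          change P (X ⁻¹' (A ∩ T ⁻¹' B)) = P ((fun ω => Ψ (Y ω, Z ω)) ⁻¹' (A ∩ T ⁻¹' B))
          rw [← Measure.map_apply hX (hA.inter (hT hB)), ← hlaw,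
            Measure.map_apply hΨYZ (hA.inter (hT hB))]
      _ = P {ω | (Y ω, Z ω) ∈ Ψ ⁻¹' A ∧ Z ω ∈ B} := by
          refine measure_congr (eventuallyEq_set.mpr ?_)
          filter_upwards [hTZ] with ω hω
          simp [hω]
      _ = ∫⁻ z in B, (P.map fun ω => Ψ (Y ω, z)) A ∂(P.map (T ∘ X)) := by
          simp_rw [hlaw_TX, hp hA]
          exact hindep.measure_prodMk_mem_and_mem_eq_setLIntegral hY hZ (hΨ hA) hB

/-- If `X` splits as `Ψ(Y,Z)` with `Y ⟂ Z`, `T(Ψ(Y,Z)) = Z` a.s. and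
`Ψ(Y,Z) ~ X`, then `p(A,z) := P(Ψ(Y,z) ∈ A)` is a regular conditional probability of `X`
given `T(X)`. -/
theorem stmt1 {Ω E F G : Type*} [MeasurableSpace Ω]
    [TopologicalSpace E] [PolishSpace E] [MeasurableSpace E] [BorelSpace E]
    [MetricSpace F] [TopologicalSpace.SeparableSpace F] [MeasurableSpace F] [BorelSpace F]
    [MeasurableSpace G]
    (P : Measure Ω) [IsProbabilityMeasure P]
    (X : Ω → E) (hX : Measurable X) (T : E → F) (hT : Measurable T)
    (Y : Ω → G) (Z : Ω → F) (hY : Measurable Y) (hZ : Measurable Z)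
    (hindep : IndepFun Y Z P)
    (Ψ : G × F → E) (hΨ : Measurable Ψ)
    (hTZ : ∀ᵐ ω ∂P, T (Ψ (Y ω, Z ω)) = Z ω)
    (hlaw : P.map (fun ω => Ψ (Y ω, Z ω)) = P.map X) :
    IsRCP P X (T ∘ X) (fun z => P.map fun ω => Ψ (Y ω, z)) :=
  stmt1_general P X hX T hT Y Z hY hZ hindep Ψ hΨ hTZ hlaw
end

section
/- Let E be a Polish space, F a separable metric space, X a random element in E and T : E → F Borel measurable. Suppose there exist a measurable space G, random elements Y in G and Z in F on a common probability space with Y and Z independent, and a measurable map Ψ : G × F → E with T(Ψ(Y,Z)) = Z almost surely and Ψ(Y,Z) equal in law to X. Let (ξ^n)_{n≥1} be a sequence of F-valued random elements, each independent of Y, satisfying (B1) and (B2) for a point z0 ∈ F, and assume that the value ν of the conditional distribution of X to the event {T(X) = z0} along (ξ^n) exists. Then the random elements Ψ(Y, ξ^n) converge in distribution to ν as n → ∞. -/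
open MeasureTheory Filter Topology BoundedContinuousFunction ProbabilityTheory

/-- `ν` is the value of the conditional distribution of `X` to the event `{T(X) = z0}`
along the sequence `ξ` of random elements on `(Ω', Q)`, computed with the regular
conditional probability `p`. -/
def IsValueAlong {E F Ω' : Type*} [MeasurableSpace E] [TopologicalSpace E]
    [MeasurableSpace Ω'] (Q : Measure Ω') (ξ : ℕ → Ω' → F)
    (p : F → Measure E) (ν : Measure E) : Prop :=
  ∀ f : E →ᵇ ℝ,
    Tendsto (fun n => ∫ ω, (∫ x, f x ∂(p (ξ n ω))) ∂Q) atTop (𝓝 (∫ x, f x ∂ν))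

/-- In the setting of the splitting `X ~ Ψ(Y,Z)`, `Y ⟂ Z`,
`T(Ψ(Y,Z)) = Z` a.s., if `(ξⁿ)` is a sequence of `F`-valued random elements independent of
`Y` satisfying (B1) and (B2) for `z0`, and the value `ν` of the conditional distribution of
`X` to the event `{T(X) = z0}` along `(ξⁿ)` exists, then `Ψ(Y, ξⁿ)` converges in
distribution to `ν`. -/
theorem stmt2 {Ω E F G : Type*} [MeasurableSpace Ω]
    [TopologicalSpace E] [PolishSpace E] [MeasurableSpace E] [BorelSpace E]
    [MetricSpace F] [TopologicalSpace.SeparableSpace F] [MeasurableSpace F] [BorelSpace F]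
    [MeasurableSpace G]
    (P : Measure Ω) [IsProbabilityMeasure P]
    (X : Ω → E) (hX : Measurable X) (T : E → F) (hT : Measurable T)
    (Y : Ω → G) (Z : Ω → F) (hY : Measurable Y) (hZ : Measurable Z)
    (hindep : IndepFun Y Z P)
    (Ψ : G × F → E) (hΨ : Measurable Ψ)
    (hTZ : ∀ᵐ ω ∂P, T (Ψ (Y ω, Z ω)) = Z ω)
    (hlaw : P.map (fun ω => Ψ (Y ω, Z ω)) = P.map X)
    (z0 : F) (ξ : ℕ → Ω → F) (hξmeas : ∀ n, Measurable (ξ n))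
    (hξindep : ∀ n, IndepFun (ξ n) Y P)
    (hB1 : ∀ n, P.map (ξ n) ≪ P.map (T ∘ X))
    (hB2 : ∀ f : F →ᵇ ℝ, Tendsto (fun n => ∫ ω, f (ξ n ω) ∂P) atTop (𝓝 (f z0)))
    (ν : Measure E) (hν : IsProbabilityMeasure ν)
    (hval : ∀ p : F → Measure E, IsRCP P X (T ∘ X) p → IsValueAlong P ξ p ν) :
    ∀ f : E →ᵇ ℝ,
      Tendsto (fun n => ∫ ω, f (Ψ (Y ω, ξ n ω)) ∂P) atTop (𝓝 (∫ x, f x ∂ν)) := by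
  -- define the kernel p z := law of Ψ(Y, z)
  intro f
  set μY : Measure G := P.map Y with hμY
  have hμYprob : IsProbabilityMeasure μY := Measure.isProbabilityMeasure_map hY.aemeasurable
  set p : F → Measure E := fun z => μY.map (fun g => Ψ (g, z)) with hp
  have hΨz : ∀ z : F, Measurable (fun g => Ψ (g, z)) :=
    fun z => hΨ.comp (measurable_id.prodMk measurable_const)
  -- p is a regular conditional probability of X given T ∘ X
  have hRCP : IsRCP P X (T ∘ X) p := by
    constructor
    · intro z
      exact Measure.isProbabilityMeasure_map (hΨz z).aemeasurable
    · intro A hA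
      have : (fun z => p z A) = fun z => μY ((fun g => (g, z)) ⁻¹' (Ψ ⁻¹' A)) := by
        funext z
        rw [hp, Measure.map_apply (hΨz z) hA]
        rfl
      rw [this]
      exact measurable_measure_prodMk_right (hΨ hA)
    · intro A B hA hB
      -- law of T ∘ X equals law of Z
      have hW : Measurable fun ω => Ψ (Y ω, Z ω) := hΨ.comp (hY.prodMk hZ)
      have hTX : P.map (T ∘ X) = P.map Z := by
        have h1 : P.map (T ∘ X) = (P.map X).map T := (Measure.map_map hT hX).symm
        have h2 : (P.map X).map T = P.map (fun ω => T (Ψ (Y ω, Z ω))) := by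
          rw [← hlaw, Measure.map_map hT hW]; rfl
        have h3 : P.map (fun ω => T (Ψ (Y ω, Z ω))) = P.map Z := Measure.map_congr hTZ
        rw [h1, h2, h3]
      -- LHS in terms of (Y, Z)
      have hset : MeasurableSet (A ∩ T ⁻¹' B) := hA.inter (hT hB)
      have hLHS : P {ω | X ω ∈ A ∧ (T ∘ X) ω ∈ B}
          = P {ω | Ψ (Y ω, Z ω) ∈ A ∧ Z ω ∈ B} := by
        have e1 : P {ω | X ω ∈ A ∧ (T ∘ X) ω ∈ B} = (P.map X) (A ∩ T ⁻¹' B) := by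
          rw [Measure.map_apply hX hset]; rfl
        have e2 : (P.map X) (A ∩ T ⁻¹' B)
            = P {ω | Ψ (Y ω, Z ω) ∈ A ∧ T (Ψ (Y ω, Z ω)) ∈ B} := by
          rw [← hlaw, Measure.map_apply hW hset]; rfl
        have e3 : P {ω | Ψ (Y ω, Z ω) ∈ A ∧ T (Ψ (Y ω, Z ω)) ∈ B}
            = P {ω | Ψ (Y ω, Z ω) ∈ A ∧ Z ω ∈ B} := by
          apply measure_congr
          filter_upwards [hTZ] with ω hω
          show (Ψ (Y ω, Z ω) ∈ A ∧ T (Ψ (Y ω, Z ω)) ∈ B) = (Ψ (Y ω, Z ω) ∈ A ∧ Z ω ∈ B)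
          rw [hω]
        rw [e1, e2, e3]
      -- independence: law of (Y, Z) is product
      have hYZ : P.map (fun ω => (Y ω, Z ω)) = μY.prod (P.map Z) :=
        (indepFun_iff_map_prod_eq_prod_map_map hY.aemeasurable hZ.aemeasurable).1 hindep
      have hS : MeasurableSet ((Ψ ⁻¹' A) ∩ (Prod.snd ⁻¹' B) : Set (G × F)) :=
        (hΨ hA).inter (measurable_snd hB)
      have e4 : P {ω | Ψ (Y ω, Z ω) ∈ A ∧ Z ω ∈ B}
          = (μY.prod (P.map Z)) ((Ψ ⁻¹' A) ∩ (Prod.snd ⁻¹' B)) := by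
        rw [← hYZ, Measure.map_apply (hY.prodMk hZ) hS]; rfl
      rw [hLHS, e4, hTX, Measure.prod_apply_symm hS]
      have e5 : ∀ z : F, μY ((fun g => (g, z)) ⁻¹' ((Ψ ⁻¹' A) ∩ (Prod.snd ⁻¹' B)))
          = B.indicator (fun z => p z A) z := by
        intro z
        by_cases hzB : z ∈ B
        · rw [Set.indicator_of_mem hzB, hp, Measure.map_apply (hΨz z) hA]
          congr 1
          ext g
          simp [hzB]
        · rw [Set.indicator_of_notMem hzB]
          convert measure_empty (μ := μY)
          ext g
          simp [hzB]
      simp_rw [e5]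
      rw [lintegral_indicator hB]
  -- from the value hypothesis
  have hIV := hval p hRCP f
  -- identify the integrals
  have key : ∀ n, ∫ ω, f (Ψ (Y ω, ξ n ω)) ∂P = ∫ ω, (∫ x, f x ∂(p (ξ n ω))) ∂P := by
    intro n
    set μn : Measure F := P.map (ξ n) with hμn
    have hμnprob : IsProbabilityMeasure μn := Measure.isProbabilityMeasure_map (hξmeas n).aemeasurable
    have hprod : P.map (fun ω => (ξ n ω, Y ω)) = μn.prod μY :=
      (indepFun_iff_map_prod_eq_prod_map_map (hξmeas n).aemeasurable hY.aemeasurable).1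
        (hξindep n)
    have hgm : Measurable (fun q : F × G => f (Ψ (q.2, q.1))) :=
      f.continuous.measurable.comp (hΨ.comp (measurable_snd.prodMk measurable_fst))
    have hint : Integrable (fun q : F × G => f (Ψ (q.2, q.1))) (μn.prod μY) := by
      refine ⟨hgm.aestronglyMeasurable, ?_⟩
      apply HasFiniteIntegral.of_bounded (C := ‖f‖)
      filter_upwards with q using f.norm_coe_le_norm _
    have e1 : ∫ ω, f (Ψ (Y ω, ξ n ω)) ∂P
        = ∫ q : F × G, f (Ψ (q.2, q.1)) ∂(μn.prod μY) := by
      rw [← hprod, integral_map ((hξmeas n).prodMk hY).aemeasurable hgm.aestronglyMeasurable]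
    have e2 : ∫ q : F × G, f (Ψ (q.2, q.1)) ∂(μn.prod μY)
        = ∫ z, ∫ g, f (Ψ (g, z)) ∂μY ∂μn := integral_prod _ hint
    have e3 : ∀ z : F, (∫ x, f x ∂(p z)) = ∫ g, f (Ψ (g, z)) ∂μY := by
      intro z
      rw [hp]
      exact integral_map (hΨz z).aemeasurable f.continuous.measurable.aestronglyMeasurable
    have hsm : StronglyMeasurable (fun z => ∫ g, f (Ψ (g, z)) ∂μY) := by
      apply MeasureTheory.StronglyMeasurable.integral_prod_right (f := fun z g => f (Ψ (g, z)))
      exact (f.continuous.measurable.comp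
        (hΨ.comp (measurable_snd.prodMk measurable_fst))).stronglyMeasurable
    have e4 : ∫ ω, (∫ x, f x ∂(p (ξ n ω))) ∂P = ∫ z, ∫ g, f (Ψ (g, z)) ∂μY ∂μn := by
      simp_rw [e3]
      rw [hμn, integral_map (hξmeas n).aemeasurable hsm.aestronglyMeasurable]
    rw [e1, e2, e4]
  simpa only [key] using hIV
end

section
/- Let E be a Polish space with metric d, X a random element in E, and C ⊆ E a closed set such that P(X ∈ C_ε) > 0 for every ε > 0, where C_ε := {x ∈ E : d(C,x) < ε}. Define T(x) := d(C,x), and for each n ≥ 1 let ξ^n be a [0,∞)-valued random variable whose law is given by P(ξ^n ∈ A) = P(T(X) ∈ A and T(X) < 1/n) / P(T(X) < 1/n) for Borel A ⊆ [0,∞). Then: (a) the sequence (ξ^n) satisfies (B1) and (B2) with z0 = 0; (b) for any regular conditional probability p of X given T(X) and any bounded continuous f : E → ℝ, E[∫_E f(x) p(dx, ξ^n)] = E[f(X) | X ∈ C_{1/n}]; consequently, if the conditional laws P(X ∈ · | X ∈ C_{1/n}) converge weakly to a probability measure ν, then ν is the value of the conditional distribution of X to the event {T(X) = 0} along (ξ^n).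 -/
/-!
Disintegrating along a regular conditional probability `p` of `X` given `T(X)` turns
`E[∫ f dp(·, ξⁿ)]` into `E[f(X); T(X) < 1/n] / P(T(X) < 1/n)`, which is the integral of `f`
against the conditional law `P(X ∈ · | X ∈ C_{1/n})`; this gives (b) and hence (c). Since
`T ≥ 0`, the law of `ξⁿ` is a probability measure carried by `[0, 1/n)`, so it converges weakly
to the Dirac mass at `0`.
-/

open MeasureTheory Filter Topology BoundedContinuousFunction

/-- The law of `ξⁿ`: the law `μT` of `T(X)` conditioned on the event `{T(X) < 1/n}`. -/
noncomputable def xiLaw (μT : Measure ℝ) (n : ℕ) : Measure ℝ :=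
  (μT (Set.Iio (1 / (n : ℝ))))⁻¹ • μT.restrict (Set.Iio (1 / (n : ℝ)))

/-- The conditional law `P(X ∈ · | X ∈ C_ε)` where `C_ε = {x : d(C,x) < ε}`. -/
noncomputable def condLaw {Ω E : Type*} [MeasurableSpace Ω] [MeasurableSpace E]
    [MetricSpace E] (P : Measure Ω) (X : Ω → E) (C : Set E) (ε : ℝ) : Measure E :=
  (P {ω | Metric.infDist (X ω) C < ε})⁻¹ •
    (P.map X).restrict {x | Metric.infDist x C < ε}

open ProbabilityTheory

namespace MeasureTheory.Measure

variable {α β G : Type*} {mα : MeasurableSpace α} {mβ : MeasurableSpace β}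
  [NormedAddCommGroup G] [NormedSpace ℝ G]

theorem integral_comp (μ : Measure α) (κ : Kernel α β) {f : β → G}
    (hf : Integrable f (κ ∘ₘ μ)) :
    ∫ y, f y ∂(κ ∘ₘ μ) = ∫ x, ∫ y, f y ∂(κ x) ∂μ := by
  rw [comp_eq_comp_const_apply] at hf ⊢
  exact Kernel.integral_comp hf

end MeasureTheory.Measure

namespace IsRCP

variable {Ω E F : Type*} [MeasurableSpace Ω] [MeasurableSpace E] [MeasurableSpace F]
  {P : Measure Ω} {X : Ω → E} {ξ : Ω → F} {p : F → Measure E}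

theorem measurable (h : IsRCP P X ξ p) : Measurable p :=
  Measure.measurable_of_measurable_coe p h.meas

theorem bind_restrict (h : IsRCP P X ξ p) (hX : Measurable X) {B : Set F}
    (hB : MeasurableSet B) :
    ((P.map ξ).restrict B).bind p = (P.restrict (ξ ⁻¹' B)).map X := by
  ext A hA
  rw [Measure.bind_apply hA h.measurable.aemeasurable, ← h.disint A B hA hB,
    Measure.map_apply hX hA, Measure.restrict_apply (hX hA)]
  rfl

theorem setIntegral_integral [TopologicalSpace E] [OpensMeasurableSpace E] [IsFiniteMeasure P]
    (h : IsRCP P X ξ p) (hX : Measurable X) {B : Set F} (hB : MeasurableSet B) (f : E →ᵇ ℝ) :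
    ∫ z in B, (∫ x, f x ∂(p z)) ∂(P.map ξ) = ∫ ω in ξ ⁻¹' B, f (X ω) ∂P := by
  let κ : Kernel F E := ⟨p, h.measurable⟩
  have : IsMarkovKernel κ := ⟨h.isProb⟩
  have hcomp : κ ∘ₘ (P.map ξ).restrict B = (P.restrict (ξ ⁻¹' B)).map X :=
    h.bind_restrict hX hB
  rw [← integral_map hX.aemeasurable f.continuous.aestronglyMeasurable, ← hcomp,
    Measure.integral_comp _ _ (f.integrable _)]
  rfl

end IsRCP

theorem tendsto_integral_of_forall_ae_dist_lt {ι α : Type*} [PseudoMetricSpace α]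
    [MeasurableSpace α] [OpensMeasurableSpace α] {l : Filter ι} {μ : ι → Measure α}
    (hμ : ∀ᶠ i in l, IsProbabilityMeasure (μ i)) {x : α}
    (hconc : ∀ δ > 0, ∀ᶠ i in l, ∀ᵐ y ∂(μ i), dist y x < δ) (f : α →ᵇ ℝ) :
    Tendsto (fun i => ∫ y, f y ∂(μ i)) l (𝓝 (f x)) := by
  rw [Metric.tendsto_nhds]
  intro ε hε
  obtain ⟨δ, hδ, hfδ⟩ := Metric.continuousAt_iff.mp f.continuous.continuousAt (ε / 2)
    (half_pos hε)
  filter_upwards [hμ, hconc δ hδ] with i hprob hnear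
  have hclose : ∀ᵐ y ∂(μ i), ‖f y - f x‖ ≤ ε / 2 :=
    hnear.mono fun y hy => (hfδ hy).le
  calc dist (∫ y, f y ∂(μ i)) (f x) = ‖∫ y, (f y - f x) ∂(μ i)‖ := by
        rw [integral_sub (f.integrable _) (integrable_const _), integral_const, probReal_univ,
          one_smul, dist_eq_norm]
    _ ≤ ε / 2 * (μ i).real Set.univ := norm_integral_le_of_norm_le_const hclose
    _ < ε := by rw [probReal_univ, mul_one]; exact half_lt_self hε

section xiLaw

variable {μT : Measure ℝ}

theorem xiLaw_absolutelyContinuous (n : ℕ) : xiLaw μT n ≪ μT :=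
  Measure.smul_absolutelyContinuous.trans Measure.absolutelyContinuous_restrict

theorem isProbabilityMeasure_xiLaw [IsFiniteMeasure μT] {n : ℕ}
    (hn : μT (Set.Iio (1 / (n : ℝ))) ≠ 0) : IsProbabilityMeasure (xiLaw μT n) :=
  ⟨by rw [xiLaw, Measure.smul_apply, Measure.restrict_apply_univ, smul_eq_mul,
    ENNReal.inv_mul_cancel hn (measure_ne_top _ _)]⟩

theorem ae_abs_lt_of_xiLaw (h0 : ∀ᵐ z ∂μT, 0 ≤ z) (n : ℕ) :
    ∀ᵐ z ∂(xiLaw μT n), |z| < 1 / (n : ℝ) := by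
  refine Measure.ae_smul_measure ?_ _
  filter_upwards [ae_restrict_mem measurableSet_Iio, ae_restrict_of_ae h0] with z hlt hnonneg
  rwa [abs_of_nonneg hnonneg]

theorem tendsto_integral_xiLaw [IsFiniteMeasure μT] (h0 : ∀ᵐ z ∂μT, 0 ≤ z)
    (hpos : ∀ ε : ℝ, 0 < ε → μT (Set.Iio ε) ≠ 0) (f : ℝ →ᵇ ℝ) :
    Tendsto (fun n => ∫ z, f z ∂(xiLaw μT n)) atTop (𝓝 (f 0)) := by
  refine tendsto_integral_of_forall_ae_dist_lt ?_ (fun δ hδ => ?_) f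
  · filter_upwards [eventually_gt_atTop 0] with n hn
    exact isProbabilityMeasure_xiLaw (hpos _ (by positivity))
  · filter_upwards [tendsto_one_div_atTop_nhds_zero_nat.eventually (gt_mem_nhds hδ)] with n hn
    filter_upwards [ae_abs_lt_of_xiLaw h0 n] with z hz
    rw [Real.dist_eq, sub_zero]
    exact hz.trans hn

theorem integral_xiLaw (n : ℕ) (g : ℝ → ℝ) :
    ∫ z, g z ∂(xiLaw μT n) =
      (∫ z in Set.Iio (1 / (n : ℝ)), g z ∂μT) / (μT (Set.Iio (1 / (n : ℝ)))).toReal := by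
  rw [xiLaw, integral_smul_measure, ENNReal.toReal_inv, smul_eq_mul, inv_mul_eq_div]

end xiLaw

theorem integral_condLaw {Ω E : Type*} [MeasurableSpace Ω] [MetricSpace E] [MeasurableSpace E]
    [OpensMeasurableSpace E] (P : Measure Ω) {X : Ω → E} (hX : Measurable X) (C : Set E)
    (ε : ℝ) {f : E → ℝ} (hf : Measurable f) :
    ∫ x, f x ∂(condLaw P X C ε) =
      (∫ ω in {ω | Metric.infDist (X ω) C < ε}, f (X ω) ∂P) /
        (P {ω | Metric.infDist (X ω) C < ε}).toReal := by
  have hU : MeasurableSet {x : E | Metric.infDist x C < ε} :=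
    measurableSet_lt (Metric.continuous_infDist_pt C).measurable measurable_const
  rw [condLaw, integral_smul_measure, setIntegral_map hU hf.aestronglyMeasurable hX.aemeasurable,
    ENNReal.toReal_inv, smul_eq_mul, inv_mul_eq_div]
  rfl

theorem stmt3_general {Ω E : Type*} [MeasurableSpace Ω]
    [MetricSpace E] [MeasurableSpace E] [BorelSpace E]
    (P : Measure Ω) [IsProbabilityMeasure P]
    (X : Ω → E) (hX : Measurable X)
    (C : Set E)
    (hCpos : ∀ ε : ℝ, 0 < ε → 0 < P {ω | Metric.infDist (X ω) C < ε}) :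
    -- (a) (B1): absolute continuity of the law of `ξⁿ` w.r.t. the law of `T(X)`
    (∀ n : ℕ, 1 ≤ n →
        xiLaw (P.map fun ω => Metric.infDist (X ω) C) n ≪
          (P.map fun ω => Metric.infDist (X ω) C)) ∧
    -- (a) (B2): `ξⁿ → z0 = 0` in distribution
    (∀ f : ℝ →ᵇ ℝ,
        Tendsto (fun n => ∫ z, f z ∂(xiLaw (P.map fun ω => Metric.infDist (X ω) C) n))
          atTop (𝓝 (f 0))) ∧
    -- (b) `E[∫ f(x) p(dx, ξⁿ)] = E[f(X) | X ∈ C_{1/n}]`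
    (∀ p : ℝ → Measure E,
        IsRCP P X (fun ω => Metric.infDist (X ω) C) p →
        ∀ n : ℕ, 1 ≤ n → ∀ f : E →ᵇ ℝ,
          ∫ z, (∫ x, f x ∂(p z)) ∂(xiLaw (P.map fun ω => Metric.infDist (X ω) C) n) =
            (∫ ω in {ω | Metric.infDist (X ω) C < 1 / (n : ℝ)}, f (X ω) ∂P) /
              (P {ω | Metric.infDist (X ω) C < 1 / (n : ℝ)}).toReal) ∧
    -- (c) weak convergence of the conditional laws gives the value along `(ξⁿ)`
    (∀ ν : Measure E, IsProbabilityMeasure ν →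
        (∀ f : E →ᵇ ℝ,
          Tendsto (fun n => ∫ x, f x ∂(condLaw P X C (1 / (n : ℝ)))) atTop
            (𝓝 (∫ x, f x ∂ν))) →
        ∀ p : ℝ → Measure E,
          IsRCP P X (fun ω => Metric.infDist (X ω) C) p →
          ∀ f : E →ᵇ ℝ,
            Tendsto
              (fun n => ∫ z, (∫ x, f x ∂(p z))
                ∂(xiLaw (P.map fun ω => Metric.infDist (X ω) C) n))
              atTop (𝓝 (∫ x, f x ∂ν))) := by
  set T : Ω → ℝ := fun ω => Metric.infDist (X ω) C
  have hT : Measurable T := (Metric.continuous_infDist_pt C).measurable.comp hX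
  have hT_nonneg : ∀ᵐ z ∂(P.map T), 0 ≤ z :=
    (ae_map_iff hT.aemeasurable (measurableSet_le measurable_const measurable_id)).2
      (ae_of_all _ fun _ => Metric.infDist_nonneg)
  have hT_Iio : ∀ r : ℝ, P.map T (Set.Iio r) = P {ω | Metric.infDist (X ω) C < r} :=
    fun r => Measure.map_apply hT measurableSet_Iio
  have hb : ∀ p : ℝ → Measure E, IsRCP P X T p → ∀ (n : ℕ) (f : E →ᵇ ℝ),
      ∫ z, (∫ x, f x ∂(p z)) ∂(xiLaw (P.map T) n) =
        (∫ ω in {ω | Metric.infDist (X ω) C < 1 / (n : ℝ)}, f (X ω) ∂P) /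
          (P {ω | Metric.infDist (X ω) C < 1 / (n : ℝ)}).toReal := fun p hp n f => by
    rw [integral_xiLaw, hp.setIntegral_integral hX measurableSet_Iio, hT_Iio]
    rfl
  refine ⟨fun n _ => xiLaw_absolutelyContinuous n,
    tendsto_integral_xiLaw hT_nonneg (fun ε hε => (hT_Iio ε).trans_ne (hCpos ε hε).ne'),
    fun p hp n _ f => hb p hp n f, fun ν _ hconv p hp f => ?_⟩
  refine ((hconv f).comp tendsto_natCast_atTop_atTop).congr fun n => ?_
  simp only [Function.comp_apply]
  rw [integral_condLaw P hX C _ f.continuous.measurable, hb p hp n f]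

/-- For a closed set `C` in a Polish space `E` with
`P(X ∈ C_ε) > 0` for all `ε > 0`, where `C_ε = {x : d(C,x) < ε}` and `T(x) := d(C,x)`:
(a) the random variables `ξⁿ` with laws `xiLaw` satisfy (B1) and (B2) with `z0 = 0`;
(b) `E[∫ f(x) p(dx, ξⁿ)] = E[f(X) | X ∈ C_{1/n}]` for any regular conditional probability
`p` of `X` given `T(X)`;
(c) consequently, if `P(X ∈ · | X ∈ C_{1/n})` converges weakly to `ν`, then `ν` is the
value of the conditional distribution of `X` to the event `{T(X) = 0}` along `(ξⁿ)`. -/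
theorem stmt3 {Ω E : Type*} [MeasurableSpace Ω]
    [MetricSpace E] [PolishSpace E] [MeasurableSpace E] [BorelSpace E]
    (P : Measure Ω) [IsProbabilityMeasure P]
    (X : Ω → E) (hX : Measurable X)
    (C : Set E) (hC : IsClosed C)
    (hCpos : ∀ ε : ℝ, 0 < ε → 0 < P {ω | Metric.infDist (X ω) C < ε}) :
    -- (a) (B1): absolute continuity of the law of `ξⁿ` w.r.t. the law of `T(X)`
    (∀ n : ℕ, 1 ≤ n →
        xiLaw (P.map fun ω => Metric.infDist (X ω) C) n ≪
          (P.map fun ω => Metric.infDist (X ω) C)) ∧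
    -- (a) (B2): `ξⁿ → z0 = 0` in distribution
    (∀ f : ℝ →ᵇ ℝ,
        Tendsto (fun n => ∫ z, f z ∂(xiLaw (P.map fun ω => Metric.infDist (X ω) C) n))
          atTop (𝓝 (f 0))) ∧
    -- (b) `E[∫ f(x) p(dx, ξⁿ)] = E[f(X) | X ∈ C_{1/n}]`
    (∀ p : ℝ → Measure E,
        IsRCP P X (fun ω => Metric.infDist (X ω) C) p →
        ∀ n : ℕ, 1 ≤ n → ∀ f : E →ᵇ ℝ,
          ∫ z, (∫ x, f x ∂(p z)) ∂(xiLaw (P.map fun ω => Metric.infDist (X ω) C) n) =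
            (∫ ω in {ω | Metric.infDist (X ω) C < 1 / (n : ℝ)}, f (X ω) ∂P) /
              (P {ω | Metric.infDist (X ω) C < 1 / (n : ℝ)}).toReal) ∧
    -- (c) weak convergence of the conditional laws gives the value along `(ξⁿ)`
    (∀ ν : Measure E, IsProbabilityMeasure ν →
        (∀ f : E →ᵇ ℝ,
          Tendsto (fun n => ∫ x, f x ∂(condLaw P X C (1 / (n : ℝ)))) atTop
            (𝓝 (∫ x, f x ∂ν))) →
        ∀ p : ℝ → Measure E,
          IsRCP P X (fun ω => Metric.infDist (X ω) C) p →
          ∀ f : E →ᵇ ℝ,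
            Tendsto
              (fun n => ∫ z, (∫ x, f x ∂(p z))
                ∂(xiLaw (P.map fun ω => Metric.infDist (X ω) C) n))
              atTop (𝓝 (∫ x, f x ∂ν))) :=
  stmt3_general P X hX C hCpos
end

section
/- Let E be a Polish space, F a separable metric space, X a random element in E, T : E → F Borel measurable, z0 ∈ F, ν a Borel probability measure on E, and p a regular conditional probability of X given T(X). Let (f_k)_{k≥1} be a sequence of bounded continuous real functions on E with the property that, for any Borel probability measures (μ_n) and μ on E, convergence ∫_E f_k dμ_n → ∫_E f_k dμ for all k implies weak convergence μ_n → μ. For k, m ≥ 1 set A_m^k := {z ∈ F : |∫_E f_k(x) p(dx,z) − ∫_E f_k(x) ν(dx)| ≥ 1/m}. Assume that for every k, m ≥ 1 there exists δ_m^k > 0 such that P^{T(X)}(A_m^k ∩ B_m^k) = 0, where B_m^k is the closed/open ball in F of center z0 and radius δ_m^k and P^{T(X)} is the law of T(X). Then the map p' defined by p'(·,z) := p(·,z) if z ∉ ⋃_{k,m≥1} (A_m^k ∩ B_m^k) and p'(·,z) := ν otherwise, is a regular conditional probability of X given T(X), the map z ↦ p'(·,z) is continuous at z0 with respect to the weak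 topology, and p'(·, z0) = ν. -/
open MeasureTheory Filter Topology BoundedContinuousFunction Classical

/-- The set `A_m^k = {z : |∫ f_k dp(·,z) − ∫ f_k dν| ≥ 1/m}` (with `m ≥ 1` encoded
as `m+1`, `m : ℕ`). -/
def Aset {E F : Type*} [MeasurableSpace E] [TopologicalSpace E]
    (p : F → Measure E) (ν : Measure E) (f : ℕ → E →ᵇ ℝ) (k m : ℕ) : Set F :=
  {z | 1 / (m + 1 : ℝ) ≤ |(∫ x, f k x ∂(p z)) - ∫ x, f k x ∂ν|}


open ProbabilityTheory in
lemma my_meas_integral {E F : Type*} [MeasurableSpace E] [TopologicalSpace E]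
    [OpensMeasurableSpace E] [MeasurableSpace F]
    (p : F → Measure E) (hmeas : ∀ A : Set E, MeasurableSet A → Measurable fun z => p z A)
    (hprob : ∀ z, IsProbabilityMeasure (p z)) (g : E →ᵇ ℝ) :
    Measurable fun z => ∫ x, g x ∂(p z) := by
  have hm : Measurable p := Measure.measurable_of_measurable_coe _ hmeas
  let κ : Kernel F E := ⟨p, hm⟩
  have : IsMarkovKernel κ := ⟨hprob⟩
  have hsm : StronglyMeasurable (Function.uncurry fun (_ : F) (x : E) => g x) :=
    (g.continuous.measurable.comp measurable_snd).stronglyMeasurable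
  exact (MeasureTheory.StronglyMeasurable.integral_kernel_prod_right (κ := κ) hsm).measurable

lemma my_ext_of_bcf {E : Type*} [MeasurableSpace E] [TopologicalSpace E] [PolishSpace E]
    [BorelSpace E] (μ ν : Measure E) [IsFiniteMeasure μ] [IsFiniteMeasure ν]
    (h : ∀ g : E →ᵇ ℝ, ∫ x, g x ∂μ = ∫ x, g x ∂ν) : μ = ν := by
  letI := TopologicalSpace.pseudoMetrizableSpacePseudoMetric E
  apply MeasureTheory.ext_of_forall_lintegral_eq_of_IsFiniteMeasure
  intro f
  have lip : LipschitzWith 1 ((↑) : NNReal → ℝ) := isometry_subtype_coe.lipschitz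
  have key : ∫ x, ((f x : ℝ)) ∂μ = ∫ x, ((f x : ℝ)) ∂ν := h (f.comp _ lip)
  have h1 := f.toReal_lintegral_coe_eq_integral μ
  have h2 := f.toReal_lintegral_coe_eq_integral ν
  refine (ENNReal.toReal_eq_toReal_iff' (f.lintegral_lt_top_of_nnreal μ).ne
    (f.lintegral_lt_top_of_nnreal ν).ne).mp ?_
  rw [h1, h2, key]

/-- If for every `k, m` the sets `A_m^k ∩ B(z0, δ_m^k)` are null for the
law of `T(X)`, then modifying `p` to be `ν` on `⋃ (A_m^k ∩ B(z0, δ_m^k))` yields a regular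
conditional probability of `X` given `T(X)` which is weakly continuous at `z0` and whose
value at `z0` is `ν`. -/
theorem stmt4 {Ω E F : Type*} [MeasurableSpace Ω]
    [TopologicalSpace E] [PolishSpace E] [MeasurableSpace E] [BorelSpace E]
    [MetricSpace F] [TopologicalSpace.SeparableSpace F] [MeasurableSpace F] [BorelSpace F]
    (P : Measure Ω) [IsProbabilityMeasure P]
    (X : Ω → E) (hX : Measurable X) (T : E → F) (hT : Measurable T) (z0 : F)
    (ν : Measure E) (hν : IsProbabilityMeasure ν)
    (p : F → Measure E) (hp : IsRCP P X (T ∘ X) p)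
    (f : ℕ → E →ᵇ ℝ)
    (hf : ∀ (μ : ℕ → Measure E) (μlim : Measure E),
      (∀ n, IsProbabilityMeasure (μ n)) → IsProbabilityMeasure μlim →
      (∀ k, Tendsto (fun n => ∫ x, f k x ∂(μ n)) atTop (𝓝 (∫ x, f k x ∂μlim))) →
      ∀ g : E →ᵇ ℝ, Tendsto (fun n => ∫ x, g x ∂(μ n)) atTop (𝓝 (∫ x, g x ∂μlim)))
    (δ : ℕ → ℕ → ℝ) (hδ : ∀ k m, 0 < δ k m)
    (hnull : ∀ k m,
      P.map (T ∘ X) (Aset p ν f k m ∩ Metric.ball z0 (δ k m)) = 0)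
    (p' : F → Measure E)
    (hp' : ∀ z, p' z =
      if z ∈ ⋃ (k : ℕ), ⋃ (m : ℕ), Aset p ν f k m ∩ Metric.ball z0 (δ k m) then ν
      else p z) :
    IsRCP P X (T ∘ X) p' ∧
    (∀ g : E →ᵇ ℝ, ContinuousAt (fun z => ∫ x, g x ∂(p' z)) z0) ∧
    p' z0 = ν := by
  have hPz : IsProbabilityMeasure (p z0) := hp.isProb z0
  set U := ⋃ (k : ℕ), ⋃ (m : ℕ), Aset p ν f k m ∩ Metric.ball z0 (δ k m) with hUdef
  have hmeasint : ∀ k, Measurable fun z => ∫ x, f k x ∂(p z) :=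
    fun k => my_meas_integral p hp.meas hp.isProb (f k)
  have hAmeas : ∀ k m, MeasurableSet (Aset p ν f k m) := by
    intro k m
    have : Aset p ν f k m = (fun z => |(∫ x, f k x ∂(p z)) - ∫ x, f k x ∂ν|) ⁻¹'
        (Set.Ici (1 / (m + 1 : ℝ))) := rfl
    rw [this]
    exact (((hmeasint k).sub measurable_const).abs) measurableSet_Ici
  have hUmeas : MeasurableSet U :=
    MeasurableSet.iUnion fun k => MeasurableSet.iUnion fun m =>
      (hAmeas k m).inter Metric.isOpen_ball.measurableSet
  have hUnull : P.map (T ∘ X) U = 0 :=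
    measure_iUnion_null fun k => measure_iUnion_null fun m => hnull k m
  have hprob' : ∀ z, IsProbabilityMeasure (p' z) := by
    intro z
    rw [hp' z]
    split
    · exact hν
    · exact hp.isProb z
  -- value at z0
  have hz0 : p' z0 = ν := by
    by_cases h0 : z0 ∈ U
    · rw [hp' z0, if_pos h0]
    · rw [hp' z0, if_neg h0]
      have hk : ∀ k, ∫ x, f k x ∂(p z0) = ∫ x, f k x ∂ν := by
        intro k
        by_contra hne
        have hpos : 0 < |(∫ x, f k x ∂(p z0)) - ∫ x, f k x ∂ν| :=
          abs_pos.mpr (sub_ne_zero.mpr hne)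
        obtain ⟨m, hm⟩ := exists_nat_one_div_lt hpos
        exact h0 (Set.mem_iUnion.mpr ⟨k, Set.mem_iUnion.mpr
          ⟨m, hm.le, Metric.mem_ball_self (hδ k m)⟩⟩)
      have hg : ∀ g : E →ᵇ ℝ, ∫ x, g x ∂(p z0) = ∫ x, g x ∂ν := by
        intro g
        have h1 := hf (fun _ => p z0) ν (fun _ => hp.isProb z0) hν
          (fun k => by simpa [hk k] using (tendsto_const_nhds : Tendsto (fun _ : ℕ => ∫ x, f k x ∂ν) atTop _)) g
        exact (tendsto_nhds_unique h1 tendsto_const_nhds).symm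
      exact my_ext_of_bcf _ _ hg
  -- continuity at z0
  have hcont : ∀ g : E →ᵇ ℝ, ContinuousAt (fun z => ∫ x, g x ∂(p' z)) z0 := by
    intro g
    rw [ContinuousAt, tendsto_iff_seq_tendsto]
    intro u hu
    have hfk : ∀ k, Tendsto (fun n => ∫ x, f k x ∂(p' (u n))) atTop
        (𝓝 (∫ x, f k x ∂ν)) := by
      intro k
      rw [Metric.tendsto_atTop]
      intro ε hε
      obtain ⟨m, hm⟩ := exists_nat_one_div_lt hε
      obtain ⟨N, hN⟩ := Metric.tendsto_atTop.mp hu (δ k m) (hδ k m)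
      refine ⟨N, fun n hn => ?_⟩
      have hball : u n ∈ Metric.ball z0 (δ k m) := by
        rw [Metric.mem_ball]; exact hN n hn
      by_cases hu' : u n ∈ U
      · rw [hp' (u n), if_pos hu']
        simpa using hε
      · rw [hp' (u n), if_neg hu']
        have hna : u n ∉ Aset p ν f k m := fun ha =>
          hu' (Set.mem_iUnion.mpr ⟨k, Set.mem_iUnion.mpr ⟨m, ha, hball⟩⟩)
        have hlt : |(∫ x, f k x ∂(p (u n))) - ∫ x, f k x ∂ν| < 1 / (m + 1 : ℝ) :=
          lt_of_not_ge hna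
        rw [Real.dist_eq]
        exact hlt.trans hm
    have := hf (fun n => p' (u n)) ν (fun n => hprob' _) hν hfk g
    simpa [Function.comp_def, hz0] using this
  refine ⟨⟨hprob', ?_, ?_⟩, hcont, hz0⟩
  · intro A hA
    have heq : (fun z => p' z A) = fun z => if z ∈ U then ν A else p z A := by
      funext z
      rw [hp' z]
      split <;> rfl
    rw [heq]
    exact Measurable.ite hUmeas measurable_const (hp.meas A hA)
  · intro A B hA hB
    rw [hp.disint A B hA hB]
    refine lintegral_congr_ae (ae_restrict_of_ae ?_)
    filter_upwards [measure_eq_zero_iff_ae_notMem.mp hUnull] with z hz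
    rw [hp' z, if_neg hz]
end

section
/- Let g = Σ_{j=1}^n g_j 1_{[a_{j−1},a_j)} be a nondecreasing step function with g_1 < ... < g_n and 0 = a_0 < ... < a_n = 1, and let L2(g) ⊆ L2[0,1] be the linear span of the indicators 1_{[a_{j−1},a_j)}, j = 1,...,n. Then for every continuous map x : [0,∞) → L2(g) there exists a unique y ∈ Coal_ex(g) such that y_t = g + ∫_0^t pr_{y_s} dx_s for all t ≥ 0, where the integral is the finite sum ∫_0^t pr_{y_s} dx_s := Σ_{k=1}^n ( pr_{y_{τ_k^y ∧ t}} x_{τ_{k−1}^y ∧ t} − pr_{y_{τ_k^y ∧ t}} x_{τ_k^y ∧ t} ), with τ_0^y := +∞. -/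
open MeasureTheory Filter Topology
open scoped NNReal ENNReal

/-- Lebesgue measure restricted to `[0,1]`; `Lp ℝ 2 μ01` is the space `L2[0,1]`. -/
noncomputable def μ01 : Measure ℝ := volume.restrict (Set.Icc 0 1)

lemma μ01_ne_top (s : Set ℝ) : μ01 s ≠ ⊤ := by
  have h1 : μ01 s ≤ volume (Set.Icc (0 : ℝ) 1) := by
    calc μ01 s ≤ μ01 Set.univ := measure_mono (Set.subset_univ s)
    _ = volume (Set.Icc (0 : ℝ) 1) := Measure.restrict_apply_univ _
  exact ne_of_lt (lt_of_le_of_lt h1 (by rw [Real.volume_Icc]; exact ENNReal.ofReal_lt_top))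

/-- The indicator function of a measurable set `s ⊆ [0,1]` as an element of `L2[0,1]`. -/
noncomputable def indL2 (s : Set ℝ) (hs : MeasurableSet s) : Lp ℝ 2 μ01 :=
  indicatorConstLp 2 hs (μ01_ne_top s) (1 : ℝ)

/-- `L2(f)`: the set of elements of `L2[0,1]` that are (a.e. equal to) `σ(f)`-measurable
functions, i.e. of the form `φ ∘ f₀` with `φ` Borel and `f₀` a representative of `f`. -/
def L2of (f : Lp ℝ 2 μ01) : Set (Lp ℝ 2 μ01) :=
  {h | ∃ f₀ φ : ℝ → ℝ, (f : ℝ → ℝ) =ᵐ[μ01] f₀ ∧ Measurable φ ∧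
    (h : ℝ → ℝ) =ᵐ[μ01] φ ∘ f₀}

noncomputable section

variable (n : ℕ) (a : Fin (n + 1) → ℝ)

/-- The indicator of the `j`-th partition interval `[a_{j-1}, a_j)` in `L2[0,1]`. -/
def indJ (j : Fin n) : Lp ℝ 2 μ01 :=
  indL2 (Set.Ico (a j.castSucc) (a j.succ)) measurableSet_Ico

/-- `L2(g)`: the linear span of the indicators of the partition intervals. -/
def Vg : Submodule ℝ (Lp ℝ 2 μ01) := Submodule.span ℝ (Set.range (indJ n a))

variable (v : Fin n → ℝ)

/-- The step function `g = Σ_j v_j 1_{[a_{j-1},a_j)}` as an element of `L2[0,1]`. -/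
def gstep : Lp ℝ 2 μ01 := ∑ j : Fin n, v j • indJ n a j

/-- The value of `h ∈ L2(g)` on the `j`-th partition interval. -/
def coefJ (h : Lp ℝ 2 μ01) (j : Fin n) : ℝ :=
  (inner ℝ h (indJ n a j) : ℝ) / (a j.succ - a j.castSucc)

/-- The canonical representative (constant on each partition interval) of `h ∈ L2(g)`. -/
def repG (h : Lp ℝ 2 μ01) : ℝ → ℝ := fun u =>
  ∑ j : Fin n, Set.indicator (Set.Ico (a j.castSucc) (a j.succ))
    (fun _ => coefJ n a h j) u

/-- `N(f) = dim L2(f)`: the number of distinct values of `f ∈ L2(g)` on the partition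
intervals. -/
def NvalG (h : Lp ℝ 2 μ01) : ℕ :=
  (Finset.image (fun j : Fin n => coefJ n a h j) Finset.univ).card

/-- The set `Coal_ex(g)` of coalescing paths in `E^g`. -/
def CoalEx : Set C(ℝ≥0, Lp ℝ 2 μ01) :=
  {y | (∀ t : ℝ≥0, y t ∈ Vg n a) ∧ y 0 = gstep n a v ∧
    ∀ u w : ℝ, u ∈ Set.Ioo (0 : ℝ) 1 → w ∈ Set.Ioo (0 : ℝ) 1 →
      ∀ s t : ℝ≥0, s ≤ t →
        repG n a (y s) u = repG n a (y s) w → repG n a (y t) u = repG n a (y t) w}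

/-- `τ_k^y = inf{t ≥ 0 : N(y_t) ≤ k} ∈ [0,∞]` (so that `τ_0^y = +∞`). -/
def tauEx (y : C(ℝ≥0, Lp ℝ 2 μ01)) (k : ℕ) : ℝ≥0∞ :=
  sInf {s : ℝ≥0∞ | ∃ t : ℝ≥0, s = (t : ℝ≥0∞) ∧ NvalG n a (y t) ≤ k}

/-- `τ_k^y ∧ t`, as an element of `[0,∞)`. -/
def tmin (y : C(ℝ≥0, Lp ℝ 2 μ01)) (k : ℕ) (t : ℝ≥0) : ℝ≥0 :=
  (min (tauEx n a y k) (t : ℝ≥0∞)).toNNReal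

/-- `L2(f)` as a closed submodule of `L2[0,1]`. -/
def L2mod (f : Lp ℝ 2 μ01) : Submodule ℝ (Lp ℝ 2 μ01) :=
  (Submodule.span ℝ (L2of f)).topologicalClosure

/-- The orthogonal projection `pr_f` of `L2[0,1]` onto `L2(f)`. -/
def prL (f : Lp ℝ 2 μ01) : Lp ℝ 2 μ01 →L[ℝ] Lp ℝ 2 μ01 :=
  haveI : CompleteSpace (L2mod f) :=
    (Submodule.isClosed_topologicalClosure _).completeSpace_coe
  (L2mod f).subtypeL.comp (L2mod f).orthogonalProjectionOnto

end

/-!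
In the basis of interval indicators, `L2(g)` becomes `ℝⁿ` and, for `f ∈ L2(g)`, `pr_f` becomes the
average over the level sets of the coordinates of `f`, weighted by the interval lengths. Since
only the `k`-th summand of the integral moves on `[τ_{k+1}, τ_k]`, a solution is characterised by
moving there as `y_t = y_{τ_{k+1}} + pr_{y_{τ_{k+1}}}(x_t - x_{τ_{k+1}})`. For existence, follow
this motion until two coordinates merge and restart from the merged point; this happens at most
`n - 1` times. For uniqueness, downward induction on `k` shows that two solutions have the same
`τ_k` and agree up to it: past the common `τ_{k+1}` both follow the same motion, so they reach
`{N ≤ k}` together, `τ_k` being attained since `{N ≤ k}` is closed and the paths are continuous.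
Then `τ_0 = ∞` gives agreement everywhere.
-/

section NumValues

open Finset

variable {ι β γ : Type*} [Fintype ι] [DecidableEq β] [DecidableEq γ]

def numValues (w : ι → β) : ℕ := #(univ.image w)

lemma exists_injOn_image_eq (w : ι → β) :
    ∃ s : Finset ι, Set.InjOn w s ∧ s.image w = univ.image w := by
  obtain ⟨s, -, hinj, himg⟩ := exists_subset_injOn_image_eq_of_surjOn (f := w) Set.univ
    (univ.image w) (fun r hr => by simpa using hr)
  exact ⟨s, hinj, himg⟩

lemma exists_mem_eq_of_image_eq {w : ι → β} {s : Finset ι} (hs : s.image w = univ.image w)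
    (i : ι) : ∃ j ∈ s, w j = w i :=
  mem_image.1 (hs ▸ mem_image_of_mem w (mem_univ i))

lemma image_eq_of_factorsThrough {w : ι → β} {w' : ι → γ} (h : Function.FactorsThrough w' w)
    {s : Finset ι} (hs : s.image w = univ.image w) : s.image w' = univ.image w' := by
  refine subset_antisymm (image_subset_image (subset_univ s)) (fun r hr => ?_)
  obtain ⟨i, -, rfl⟩ := mem_image.1 hr
  obtain ⟨j, hj, hji⟩ := exists_mem_eq_of_image_eq hs i
  exact mem_image.2 ⟨j, hj, h hji⟩

lemma numValues_le_of_factorsThrough {w : ι → β} {w' : ι → γ}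
    (h : Function.FactorsThrough w' w) : numValues w' ≤ numValues w := by
  obtain ⟨s, hinj, hs⟩ := exists_injOn_image_eq w
  calc numValues w' = #(s.image w') := by rw [numValues, image_eq_of_factorsThrough h hs]
    _ ≤ #s := card_image_le
    _ = numValues w := by rw [numValues, ← hs, card_image_of_injOn hinj]

lemma factorsThrough_of_numValues_eq {w : ι → β} {w' : ι → γ}
    (h : Function.FactorsThrough w' w) (heq : numValues w' = numValues w) :
    Function.FactorsThrough w w' := by
  obtain ⟨s, hinj, hs⟩ := exists_injOn_image_eq w
  have hinj' : Set.InjOn w' s := by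
    rw [← card_image_iff, image_eq_of_factorsThrough h hs, ← numValues, heq, numValues, ← hs,
      card_image_of_injOn hinj]
  intro i j hij
  obtain ⟨i', hi', hi⟩ := exists_mem_eq_of_image_eq hs i
  obtain ⟨j', hj', hj⟩ := exists_mem_eq_of_image_eq hs j
  rw [← hi, ← hj, hinj' hi' hj' (by rw [h hi, h hj, hij])]

lemma numValues_pos [Nonempty ι] (w : ι → β) : 0 < numValues w :=
  card_pos.2 (univ_nonempty.image w)

lemma numValues_le_card (w : ι → β) : numValues w ≤ Fintype.card ι :=
  card_image_le

lemma eq_of_numValues_le_one {w : ι → β} (h : numValues w ≤ 1) (i j : ι) : w i = w j :=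
  card_le_one.1 h _ (mem_image_of_mem w (mem_univ i)) _ (mem_image_of_mem w (mem_univ j))

lemma isClosed_setOf_numValues_le [TopologicalSpace β] [T2Space β] (k : ℕ) :
    IsClosed {w : ι → β | numValues w ≤ k} := by
  classical
  have hrepr : {w : ι → β | numValues w ≤ k} =
      ⋃ s ∈ {s : Finset ι | #s ≤ k}, ⋂ i, ⋃ j ∈ s, {w | w j = w i} := by
    ext w
    simp only [Set.mem_ofPred_eq, Set.mem_iUnion, Set.mem_iInter, exists_prop]
    constructor
    · obtain ⟨s, hinj, hs⟩ := exists_injOn_image_eq w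
      refine fun hw => ⟨s, ?_, exists_mem_eq_of_image_eq hs⟩
      rwa [← card_image_of_injOn hinj, hs]
    · rintro ⟨s, hsk, hs⟩
      refine le_trans (card_le_card (t := s.image w) fun r hr => ?_) (card_image_le.trans hsk)
      obtain ⟨i, -, rfl⟩ := mem_image.1 hr
      obtain ⟨j, hj, hji⟩ := hs i
      exact mem_image.2 ⟨j, hj, hji⟩
  rw [hrepr]
  exact (Set.toFinite _).isClosed_biUnion fun s _ => isClosed_iInter fun i =>
    s.finite_toSet.isClosed_biUnion fun j _ => isClosed_eq (continuous_apply j) (continuous_apply i)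

lemma isClosed_setOf_numValues_lt [TopologicalSpace β] [T2Space β] (m : ℕ) :
    IsClosed {w : ι → β | numValues w < m} := by
  cases m with
  | zero => simp
  | succ k => simpa [Nat.lt_succ_iff] using isClosed_setOf_numValues_le k

end NumValues

section Partition

variable {α : Type*} [LinearOrder α] {n : ℕ} {a : Fin (n + 1) → α}

lemma exists_mem_Ico_castSucc_succ {u : α} (hu : u ∈ Set.Ico (a 0) (a (Fin.last n))) :
    ∃ j : Fin n, u ∈ Set.Ico (a j.castSucc) (a j.succ) := by
  by_contra! h
  have hle : ∀ k, a k ≤ u := fun k =>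
    Fin.induction hu.1 (fun j hj => not_lt.1 fun h' => h j ⟨hj, h'⟩) k
  exact (hle (Fin.last n)).not_gt hu.2

lemma eq_of_mem_Ico_castSucc_succ (ha : Monotone a) {u : α} {i j : Fin n}
    (hi : u ∈ Set.Ico (a i.castSucc) (a i.succ)) (hj : u ∈ Set.Ico (a j.castSucc) (a j.succ)) :
    i = j := by
  have key : ∀ {i j : Fin n}, i < j → u ∈ Set.Ico (a i.castSucc) (a i.succ) →
      u ∉ Set.Ico (a j.castSucc) (a j.succ) := fun hij hi hj =>
    (hi.2.trans_le (ha (Fin.succ_le_castSucc_iff.2 hij))).not_ge hj.1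
  rcases lt_trichotomy i j with h | h | h
  · exact absurd hj (key h hi)
  · exact h
  · exact absurd hi (key h hj)

end Partition

section BlockAvg

open Finset

variable {ι β : Type*} [Fintype ι] [DecidableEq β] (ℓ : ι → ℝ)

noncomputable def levelAvg (w : ι → β) (d : ι → ℝ) (r : β) : ℝ :=
  (∑ j with w j = r, ℓ j * d j) / ∑ j with w j = r, ℓ j

noncomputable def blockAvg (w : ι → β) : (ι → ℝ) →ₗ[ℝ] ι → ℝ where
  toFun d := levelAvg ℓ w d ∘ w
  map_add' d e := by
    ext i
    simp only [levelAvg, Function.comp_apply, Pi.add_apply, mul_add, sum_add_distrib, add_div]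
  map_smul' r d := by
    ext i
    simp only [levelAvg, Function.comp_apply, Pi.smul_apply, smul_eq_mul, RingHom.id_apply,
      mul_left_comm _ r, ← mul_sum, mul_div_assoc]

lemma blockAvg_apply (w : ι → β) (d : ι → ℝ) (i : ι) :
    blockAvg ℓ w d i = levelAvg ℓ w d (w i) := rfl

lemma blockAvg_congr {γ : Type*} [DecidableEq γ] {w : ι → β} {w' : ι → γ}
    (h : ∀ i j, w i = w j ↔ w' i = w' j) : blockAvg ℓ w = blockAvg ℓ w' := by
  ext d i
  simp only [blockAvg_apply, levelAvg, h _ i]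

lemma factorsThrough_add_blockAvg (w d : ι → ℝ) :
    Function.FactorsThrough (w + blockAvg ℓ w d) w := fun i j h => by
  simp only [Pi.add_apply, blockAvg_apply, h]

/-- This makes `blockAvg ℓ w` the orthogonal projection onto the functions of `w` for the
`ℓ`-weighted inner product. -/
lemma sum_mul_sub_blockAvg_mul_eq_zero (hℓ : ∀ j, 0 < ℓ j) (w : ι → β) (d : ι → ℝ)
    (ψ : β → ℝ) : ∑ j, ℓ j * (d j - blockAvg ℓ w d j) * ψ (w j) = 0 := by
  rw [← sum_fiberwise_of_maps_to (g := w) (t := univ.image w)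
    (fun j _ => mem_image_of_mem w (mem_univ j))]
  refine sum_eq_zero fun r hr => ?_
  have hpos : 0 < ∑ j with w j = r, ℓ j := by
    obtain ⟨i, -, rfl⟩ := mem_image.1 hr
    exact sum_pos (fun j _ => hℓ j) ⟨i, by simp⟩
  calc ∑ j with w j = r, ℓ j * (d j - blockAvg ℓ w d j) * ψ (w j)
      = ψ r * ((∑ j with w j = r, ℓ j * d j) -
          levelAvg ℓ w d r * ∑ j with w j = r, ℓ j) := by
        rw [mul_sub, mul_sum, mul_sum, mul_sum, ← sum_sub_distrib]
        refine sum_congr rfl fun j hj => ?_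
        rw [blockAvg_apply, (mem_filter.1 hj).2]
        ring
    _ = 0 := by rw [levelAvg, div_mul_cancel₀ _ hpos.ne', sub_self, mul_zero]

end BlockAvg

lemma toNNReal_sInf_image_coe_mem {T : Set ℝ≥0} (hT : IsClosed T)
    (h : sInf (((↑) : ℝ≥0 → ℝ≥0∞) '' T) ≠ ⊤) :
    (sInf (((↑) : ℝ≥0 → ℝ≥0∞) '' T)).toNNReal ∈ T := by
  have hne : T.Nonempty := by
    by_contra hT
    simp [Set.not_nonempty_iff_eq_empty.1 hT] at h
  rw [sInf_image, ← ENNReal.coe_sInf hne, ENNReal.toNNReal_coe]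
  exact hT.csInf_mem hne (OrderBot.bddBelow T)

section CollisionTime

variable {ι : Type*} [Fintype ι] (u : ℝ≥0 → ι → ℝ)

/-- The collision time `τ_k` of the statement, for a path in coordinates. -/
noncomputable def collisionTime (k : ℕ) : ℝ≥0∞ :=
  sInf {s : ℝ≥0∞ | ∃ t : ℝ≥0, s = (t : ℝ≥0∞) ∧ numValues (u t) ≤ k}

noncomputable def stoppedTime (k : ℕ) (t : ℝ≥0) : ℝ≥0 :=
  (min (collisionTime u k) (t : ℝ≥0∞)).toNNReal

variable {u}

lemma collisionTime_eq_sInf_image (k : ℕ) :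
    collisionTime u k = sInf (((↑) : ℝ≥0 → ℝ≥0∞) '' {t | numValues (u t) ≤ k}) := by
  simp only [collisionTime, Set.image, Set.mem_ofPred_eq, eq_comm (a := (_ : ℝ≥0∞)), and_comm]

lemma collisionTime_le {k : ℕ} {t : ℝ≥0} (h : numValues (u t) ≤ k) :
    collisionTime u k ≤ t :=
  sInf_le ⟨t, rfl, h⟩

lemma lt_numValues_of_lt_collisionTime {k : ℕ} {t : ℝ≥0} (h : (t : ℝ≥0∞) < collisionTime u k) :
    k < numValues (u t) :=
  lt_of_not_ge fun hk => (collisionTime_le hk).not_gt h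

lemma collisionTime_antitone {k k' : ℕ} (h : k ≤ k') : collisionTime u k' ≤ collisionTime u k :=
  sInf_le_sInf fun _ ⟨t, ht, hk⟩ => ⟨t, ht, hk.trans h⟩

lemma collisionTime_zero [Nonempty ι] : collisionTime u 0 = ⊤ :=
  sInf_eq_top.2 fun _ ⟨t, _, ht⟩ => absurd ht (numValues_pos (u t)).not_ge

lemma collisionTime_card : collisionTime u (Fintype.card ι) = 0 :=
  nonpos_iff_eq_zero.1 (collisionTime_le (t := 0) (numValues_le_card _))

lemma numValues_collisionTime_le (hu : Continuous u) {k : ℕ} (h : collisionTime u k ≠ ⊤) :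
    numValues (u (collisionTime u k).toNNReal) ≤ k := by
  rw [collisionTime_eq_sInf_image] at h ⊢
  exact toNNReal_sInf_image_coe_mem ((isClosed_setOf_numValues_le k).preimage hu) h

lemma coe_stoppedTime_le (k : ℕ) (t : ℝ≥0) : (stoppedTime u k t : ℝ≥0∞) ≤ collisionTime u k := by
  rw [stoppedTime, ENNReal.coe_toNNReal (ne_top_of_le_ne_top ENNReal.coe_ne_top
    (min_le_right _ _))]
  exact min_le_left _ _

lemma stoppedTime_of_le {k : ℕ} {t : ℝ≥0} (h : (t : ℝ≥0∞) ≤ collisionTime u k) :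
    stoppedTime u k t = t := by
  rw [stoppedTime, min_eq_right h, ENNReal.toNNReal_coe]

lemma coe_stoppedTime_of_ge {k : ℕ} {t : ℝ≥0} (h : collisionTime u k ≤ t) :
    (stoppedTime u k t : ℝ≥0∞) = collisionTime u k := by
  rw [stoppedTime, min_eq_left h, ENNReal.coe_toNNReal (ne_top_of_le_ne_top ENNReal.coe_ne_top h)]

lemma stoppedTime_antitone {k k' : ℕ} (h : k ≤ k') (t : ℝ≥0) :
    stoppedTime u k' t ≤ stoppedTime u k t :=
  ENNReal.toNNReal_mono (ne_top_of_le_ne_top ENNReal.coe_ne_top (min_le_right _ _))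
    (min_le_min_right _ (collisionTime_antitone h))

end CollisionTime

section CoalescingPath

variable {ι : Type*} [Fintype ι] (c : ℝ≥0 → ι → ℝ) (ℓ : ι → ℝ)

/-- The motion `y_t = y_s + pr_{y_s}(x_t - x_s)` between two collisions, in coordinates. -/
noncomputable def projFlow (s : ℝ≥0) (ω : ι → ℝ) (t : ℝ≥0) : ι → ℝ :=
  ω + blockAvg ℓ ω (c t - c s)

noncomputable def dropTime (s : ℝ≥0) (ω : ι → ℝ) : ℝ≥0∞ :=
  sInf (((↑) : ℝ≥0 → ℝ≥0∞) '' {t | s ≤ t ∧ numValues (projFlow c ℓ s ω t) < numValues ω})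

variable {c ℓ}

@[simp]
lemma projFlow_self (s : ℝ≥0) (ω : ι → ℝ) : projFlow c ℓ s ω s = ω := by
  simp [projFlow]

lemma continuous_projFlow (hc : Continuous c) (s : ℝ≥0) (ω : ι → ℝ) :
    Continuous (projFlow c ℓ s ω) :=
  continuous_const.add ((blockAvg ℓ ω).continuous_of_finiteDimensional.comp
    (hc.sub continuous_const))

lemma factorsThrough_projFlow (s : ℝ≥0) (ω : ι → ℝ) (t : ℝ≥0) :
    Function.FactorsThrough (projFlow c ℓ s ω t) ω :=
  factorsThrough_add_blockAvg ℓ ω _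

lemma projFlow_restart {s s' : ℝ≥0} {ω : ι → ℝ}
    (h : Function.FactorsThrough ω (projFlow c ℓ s ω s')) (t : ℝ≥0) :
    projFlow c ℓ s ω t = projFlow c ℓ s' (projFlow c ℓ s ω s') t := by
  have hcongr : blockAvg ℓ ω = blockAvg ℓ (projFlow c ℓ s ω s') :=
    blockAvg_congr ℓ fun i j => ⟨fun hij => factorsThrough_projFlow s ω s' hij, fun hij => h hij⟩
  conv_rhs => rw [projFlow, ← hcongr]
  rw [projFlow, projFlow, add_assoc, ← map_add, sub_add_sub_cancel']

lemma le_dropTime (s : ℝ≥0) (ω : ι → ℝ) : (s : ℝ≥0∞) ≤ dropTime c ℓ s ω :=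
  le_sInf fun _ ⟨_, ht, hq⟩ => hq ▸ ENNReal.coe_le_coe.2 ht.1

lemma factorsThrough_of_lt_dropTime {s t : ℝ≥0} {ω : ι → ℝ} (hst : s ≤ t)
    (h : (t : ℝ≥0∞) < dropTime c ℓ s ω) : Function.FactorsThrough ω (projFlow c ℓ s ω t) := by
  refine factorsThrough_of_numValues_eq (factorsThrough_projFlow s ω t) (le_antisymm
    (numValues_le_of_factorsThrough (factorsThrough_projFlow s ω t)) (not_lt.1 fun hlt => ?_))
  exact (sInf_le (Set.mem_image_of_mem _ ⟨hst, hlt⟩) : dropTime c ℓ s ω ≤ t).not_gt h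

lemma dropTime_spec (hc : Continuous c) {s : ℝ≥0} {ω : ι → ℝ} (h : dropTime c ℓ s ω ≠ ⊤) :
    s ≤ (dropTime c ℓ s ω).toNNReal ∧
      numValues (projFlow c ℓ s ω (dropTime c ℓ s ω).toNNReal) < numValues ω :=
  toNNReal_sInf_image_coe_mem (isClosed_Ici.inter
    ((isClosed_setOf_numValues_lt _).preimage (continuous_projFlow hc s ω))) h

variable (c ℓ)

/-- The flow restarts at each `dropTime`, at most `m` times; `numValues ω ≤ m + 1` suffices, since
every restart loses a value. -/
noncomputable def coalPath : ℕ → ℝ≥0 → (ι → ℝ) → ℝ≥0 → ι → ℝ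
  | 0, s, ω => projFlow c ℓ s ω
  | m + 1, s, ω => fun t =>
      if (t : ℝ≥0∞) ≤ dropTime c ℓ s ω then projFlow c ℓ s ω t
      else coalPath m (dropTime c ℓ s ω).toNNReal
        (projFlow c ℓ s ω (dropTime c ℓ s ω).toNNReal) t

variable {c ℓ}

@[simp]
lemma coalPath_self (m : ℕ) (s : ℝ≥0) (ω : ι → ℝ) : coalPath c ℓ m s ω s = ω := by
  cases m with
  | zero => exact projFlow_self s ω
  | succ m => simp [coalPath, le_dropTime]

lemma coalPath_succ_of_le_dropTime {m : ℕ} {s t : ℝ≥0} {ω : ι → ℝ}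
    (h : (t : ℝ≥0∞) ≤ dropTime c ℓ s ω) : coalPath c ℓ (m + 1) s ω t = projFlow c ℓ s ω t :=
  if_pos h

lemma coalPath_succ_of_dropTime_le {m : ℕ} {s t : ℝ≥0} {ω : ι → ℝ}
    (hne : dropTime c ℓ s ω ≠ ⊤) (h : (dropTime c ℓ s ω).toNNReal ≤ t) :
    coalPath c ℓ (m + 1) s ω t = coalPath c ℓ m (dropTime c ℓ s ω).toNNReal
      (projFlow c ℓ s ω (dropTime c ℓ s ω).toNNReal) t := by
  rcases eq_or_lt_of_le h with rfl | hlt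
  · rw [coalPath_self, coalPath_succ_of_le_dropTime (ENNReal.coe_toNNReal_le_self)]
  · rw [← ENNReal.coe_lt_coe, ENNReal.coe_toNNReal hne] at hlt
    exact if_neg hlt.not_ge

lemma continuous_coalPath (hc : Continuous c) (m : ℕ) (s : ℝ≥0) (ω : ι → ℝ) :
    Continuous (coalPath c ℓ m s ω) := by
  induction m generalizing s ω with
  | zero => exact continuous_projFlow hc s ω
  | succ m ih =>
    by_cases hne : dropTime c ℓ s ω = ⊤
    · have : coalPath c ℓ (m + 1) s ω = projFlow c ℓ s ω :=
        funext fun t => coalPath_succ_of_le_dropTime (hne ▸ le_top)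
      exact this ▸ continuous_projFlow hc s ω
    · set σ := (dropTime c ℓ s ω).toNNReal
      have : coalPath c ℓ (m + 1) s ω = fun t =>
          if t ≤ σ then projFlow c ℓ s ω t else coalPath c ℓ m σ (projFlow c ℓ s ω σ) t := by
        funext t
        simp only [coalPath, σ, ← ENNReal.coe_le_coe, ENNReal.coe_toNNReal hne]
      rw [this]
      exact (continuous_projFlow hc s ω).if_le (ih σ _) continuous_id continuous_const
        fun t ht => by rw [ht, coalPath_self]

lemma factorsThrough_coalPath (m : ℕ) {s t : ℝ≥0} (hst : s ≤ t) (ω : ι → ℝ) :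
    Function.FactorsThrough (coalPath c ℓ m s ω t) ω := by
  induction m generalizing s ω with
  | zero => exact factorsThrough_projFlow s ω t
  | succ m ih =>
    by_cases h : (t : ℝ≥0∞) ≤ dropTime c ℓ s ω
    · rw [coalPath_succ_of_le_dropTime h]
      exact factorsThrough_projFlow s ω t
    · have hne : dropTime c ℓ s ω ≠ ⊤ := ne_top_of_lt (not_le.1 h)
      have hσt : (dropTime c ℓ s ω).toNNReal ≤ t := by
        simpa using ENNReal.toNNReal_mono ENNReal.coe_ne_top (not_le.1 h).le
      rw [coalPath_succ_of_dropTime_le hne hσt]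
      exact fun i j hij => ih hσt _ (factorsThrough_projFlow s ω _ hij)

lemma factorsThrough_coalPath_of_le (hc : Continuous c) (m : ℕ) {s : ℝ≥0} {ω : ι → ℝ}
    (hω : numValues ω ≤ m + 1) {t t' : ℝ≥0} (hst : s ≤ t) (htt' : t ≤ t') :
    Function.FactorsThrough (coalPath c ℓ m s ω t') (coalPath c ℓ m s ω t) := by
  induction m generalizing s ω with
  | zero =>
    exact fun i j _ => factorsThrough_coalPath 0 (hst.trans htt') ω (eq_of_numValues_le_one hω i j)
  | succ m ih =>
    by_cases h : (t : ℝ≥0∞) < dropTime c ℓ s ω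
    · rw [coalPath_succ_of_le_dropTime h.le]
      exact fun i j hij => factorsThrough_coalPath (m + 1) (hst.trans htt') ω
        (factorsThrough_of_lt_dropTime hst h hij)
    · have hne : dropTime c ℓ s ω ≠ ⊤ := ne_top_of_le_ne_top ENNReal.coe_ne_top (not_lt.1 h)
      have hσt : (dropTime c ℓ s ω).toNNReal ≤ t := by
        simpa using ENNReal.toNNReal_mono ENNReal.coe_ne_top (not_lt.1 h)
      rw [coalPath_succ_of_dropTime_le hne hσt, coalPath_succ_of_dropTime_le hne (hσt.trans htt')]
      exact ih (by have := (dropTime_spec hc hne).2; omega) hσt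

lemma coalPath_eq_projFlow (hc : Continuous c) (m : ℕ) {s : ℝ≥0} {ω : ι → ℝ}
    (hω : numValues ω ≤ m + 1) {s' t : ℝ≥0} (hss' : s ≤ s') (hs't : s' ≤ t)
    (hconst : ∀ r, s' ≤ r → r < t →
      numValues (coalPath c ℓ m s ω r) = numValues (coalPath c ℓ m s ω s')) :
    coalPath c ℓ m s ω t = projFlow c ℓ s' (coalPath c ℓ m s ω s') t := by
  rcases eq_or_lt_of_le hs't with rfl | hs'lt
  · simp
  induction m generalizing s ω with
  | zero =>
    exact projFlow_restart (fun i j _ => eq_of_numValues_le_one hω i j) t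
  | succ m ih =>
    by_cases h : (t : ℝ≥0∞) ≤ dropTime c ℓ s ω
    · have hs'drop := (ENNReal.coe_lt_coe.2 hs'lt).trans_le h
      rw [coalPath_succ_of_le_dropTime h, coalPath_succ_of_le_dropTime hs'drop.le]
      exact projFlow_restart (factorsThrough_of_lt_dropTime hss' hs'drop) t
    have hne : dropTime c ℓ s ω ≠ ⊤ := ne_top_of_lt (not_le.1 h)
    set σ := (dropTime c ℓ s ω).toNNReal
    have hσ : (σ : ℝ≥0∞) = dropTime c ℓ s ω := ENNReal.coe_toNNReal hne
    have hσt : σ < t := by rw [← ENNReal.coe_lt_coe, hσ]; exact not_le.1 h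
    have hdrop : numValues (projFlow c ℓ s ω σ) < numValues ω := (dropTime_spec hc hne).2
    by_cases hs'σ : s' < σ
    · have hs'drop : (s' : ℝ≥0∞) < dropTime c ℓ s ω := hσ ▸ ENNReal.coe_lt_coe.2 hs'σ
      have hkeep := factorsThrough_of_lt_dropTime hss' hs'drop
      have hσeq := hconst σ hs'σ.le hσt
      rw [coalPath_succ_of_le_dropTime hσ.le, coalPath_succ_of_le_dropTime hs'drop.le,
        le_antisymm (numValues_le_of_factorsThrough (factorsThrough_projFlow s ω s'))
          (numValues_le_of_factorsThrough hkeep)] at hσeq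
      omega
    · have hσs' := not_lt.1 hs'σ
      rw [coalPath_succ_of_dropTime_le hne hσt.le, coalPath_succ_of_dropTime_le hne hσs']
      refine ih (ω := projFlow c ℓ s ω σ) (by omega) hσs' fun r hr hrt => ?_
      rw [← coalPath_succ_of_dropTime_le hne (hσs'.trans hr),
        ← coalPath_succ_of_dropTime_le hne hσs']
      exact hconst r hr hrt

end CoalescingPath

section IntegralEquation

open Finset

variable {ι : Type*} [Fintype ι] (c : ℝ≥0 → ι → ℝ) (ℓ : ι → ℝ)

/-- The finite-sum integral `∫_0^t pr_{u_s} dc_s` of the statement, in coordinates. -/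
noncomputable def projIntegral (u : ℝ≥0 → ι → ℝ) (t : ℝ≥0) : ι → ℝ :=
  ∑ k ∈ range (Fintype.card ι), blockAvg ℓ (u (stoppedTime u (k + 1) t))
    (c (stoppedTime u k t) - c (stoppedTime u (k + 1) t))

def FollowsProjFlow (u : ℝ≥0 → ι → ℝ) : Prop :=
  ∀ (k : ℕ) (s t : ℝ≥0), (s : ℝ≥0∞) = collisionTime u (k + 1) → s ≤ t →
    (t : ℝ≥0∞) ≤ collisionTime u k → u t = projFlow c ℓ s (u s) t

variable {c ℓ} {u : ℝ≥0 → ι → ℝ}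

lemma projIntegral_zero : projIntegral c ℓ u 0 = 0 := by
  simp [projIntegral, stoppedTime]

lemma blockAvg_stoppedTime_eq_sub (hu : FollowsProjFlow c ℓ u) (k : ℕ) (t : ℝ≥0) :
    blockAvg ℓ (u (stoppedTime u (k + 1) t)) (c (stoppedTime u k t) - c (stoppedTime u (k + 1) t))
      = u (stoppedTime u k t) - u (stoppedTime u (k + 1) t) := by
  by_cases ht : (t : ℝ≥0∞) ≤ collisionTime u (k + 1)
  · rw [stoppedTime_of_le ht, stoppedTime_of_le (ht.trans (collisionTime_antitone k.le_succ)),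
      sub_self, sub_self, map_zero]
  · rw [hu k _ _ (coe_stoppedTime_of_ge (not_le.1 ht).le)
      (stoppedTime_antitone k.le_succ t) (coe_stoppedTime_le k t), projFlow, add_sub_cancel_left]

lemma integral_eq_of_followsProjFlow [Nonempty ι] (hu : FollowsProjFlow c ℓ u) (t : ℝ≥0) :
    u t = u 0 + projIntegral c ℓ u t := by
  have h0 : stoppedTime u 0 t = t := stoppedTime_of_le (by simp [collisionTime_zero])
  have hcard : stoppedTime u (Fintype.card ι) t = 0 := by
    simpa [collisionTime_card] using coe_stoppedTime_le (u := u) (Fintype.card ι) t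
  rw [projIntegral, sum_congr rfl fun k _ => blockAvg_stoppedTime_eq_sub hu k t,
    sum_range_sub' (fun k => u (stoppedTime u k t)), h0, hcard, add_sub_cancel]

lemma stoppedTime_eq_of_collisionTime_le {k : ℕ} {s t : ℝ≥0} (hs : collisionTime u k ≤ s)
    (ht : collisionTime u k ≤ t) : stoppedTime u k s = stoppedTime u k t :=
  ENNReal.coe_injective ((coe_stoppedTime_of_ge hs).trans (coe_stoppedTime_of_ge ht).symm)

/-- For `τ_{k+1} = s ≤ t ≤ τ_k`, only the `k`-th summand of the integral moves on `[s, t]`. -/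
lemma projIntegral_eq_add {k : ℕ} (hk : k < Fintype.card ι) {s t : ℝ≥0}
    (hs : (s : ℝ≥0∞) = collisionTime u (k + 1)) (hst : s ≤ t)
    (htk : (t : ℝ≥0∞) ≤ collisionTime u k) :
    projIntegral c ℓ u t = projIntegral c ℓ u s + blockAvg ℓ (u s) (c t - c s) := by
  have hle_t : ∀ j ≤ k, stoppedTime u j t = t := fun j hj =>
    stoppedTime_of_le (htk.trans (collisionTime_antitone hj))
  have hle_s : ∀ j ≤ k + 1, stoppedTime u j s = s := fun j hj =>
    stoppedTime_of_le (hs.trans_le (collisionTime_antitone hj))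
  have hge : ∀ j, k + 1 ≤ j → stoppedTime u j s = stoppedTime u j t := fun j hj =>
    have hτ := (collisionTime_antitone hj).trans hs.ge
    stoppedTime_eq_of_collisionTime_le hτ (hτ.trans (ENNReal.coe_le_coe.2 hst))
  have hkt : stoppedTime u (k + 1) t = s := by
    rw [← hge _ le_rfl, hle_s _ le_rfl]
  have hterm : ∀ j ∈ range (Fintype.card ι),
      blockAvg ℓ (u (stoppedTime u (j + 1) t)) (c (stoppedTime u j t) - c (stoppedTime u (j + 1) t))
        = blockAvg ℓ (u (stoppedTime u (j + 1) s))
            (c (stoppedTime u j s) - c (stoppedTime u (j + 1) s))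
          + if k = j then blockAvg ℓ (u s) (c t - c s) else 0 := by
    intro j _
    rcases lt_trichotomy j k with hj | rfl | hj
    · rw [hle_t j hj.le, hle_t (j + 1) hj, hle_s j (by omega), hle_s (j + 1) (by omega),
        if_neg hj.ne', sub_self, sub_self, map_zero, map_zero, add_zero]
    · rw [hle_t j le_rfl, hkt, hle_s j (by omega), hle_s (j + 1) le_rfl, if_pos rfl, sub_self,
        map_zero, zero_add]
    · rw [hge j hj, hge (j + 1) (by omega), if_neg hj.ne, add_zero]
  rw [projIntegral, sum_congr rfl hterm, sum_add_distrib, sum_ite_eq, if_pos (mem_range.2 hk),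
    projIntegral]

lemma followsProjFlow_of_integral_eq {v : ι → ℝ} (h : ∀ t, u t = v + projIntegral c ℓ u t) :
    FollowsProjFlow c ℓ u := by
  intro k s t hs hst htk
  by_cases hk : k < Fintype.card ι
  · rw [h t, projIntegral_eq_add hk hs hst htk, ← add_assoc, ← h s, projFlow]
  · have ht : t = 0 := by
      simpa [collisionTime_card] using htk.trans (collisionTime_antitone (not_lt.1 hk))
    subst ht
    rw [nonpos_iff_eq_zero.1 hst, projFlow_self]

variable {w : ℝ≥0 → ι → ℝ}

lemma followsProjFlow_of_coalescing (hu : Continuous u)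
    (hcoal : ∀ s t, s ≤ t → Function.FactorsThrough (u t) (u s))
    (hflow : ∀ s t, s ≤ t → (∀ r, s ≤ r → r < t → numValues (u r) = numValues (u s)) →
      u t = projFlow c ℓ s (u s) t) :
    FollowsProjFlow c ℓ u := by
  intro k s t hs hst htk
  refine hflow s t hst fun r hsr hrt => ?_
  have hs_le : numValues (u s) ≤ k + 1 := by
    have := numValues_collisionTime_le hu (hs ▸ ENNReal.coe_ne_top)
    rwa [← hs, ENNReal.toNNReal_coe] at this
  have hr_le := numValues_le_of_factorsThrough (hcoal s r hsr)
  have hr_gt := lt_numValues_of_lt_collisionTime ((ENNReal.coe_lt_coe.2 hrt).trans_le htk)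
  omega

theorem exists_coalescing_integral_solution [Nonempty ι] (hc : Continuous c) (v : ι → ℝ) :
    ∃ u : ℝ≥0 → ι → ℝ, Continuous u ∧ (∀ s t, s ≤ t → Function.FactorsThrough (u t) (u s)) ∧
      ∀ t, u t = v + projIntegral c ℓ u t := by
  have hv : numValues v ≤ Fintype.card ι - 1 + 1 := by
    have := numValues_le_card v; have := Fintype.card_pos (α := ι); omega
  have hu := continuous_coalPath (ℓ := ℓ) hc (Fintype.card ι - 1) 0 v
  have hcoal := fun s t (hst : s ≤ t) =>
    factorsThrough_coalPath_of_le (ℓ := ℓ) hc _ hv (zero_le (a := s)) hst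
  have hflow := followsProjFlow_of_coalescing hu hcoal
    fun s t hst => coalPath_eq_projFlow hc _ hv (zero_le (a := s)) hst
  refine ⟨_, hu, hcoal, fun t => ?_⟩
  rw [integral_eq_of_followsProjFlow hflow t, coalPath_self]

lemma collisionTime_le_of_eqOn (hu : Continuous u) {k : ℕ}
    (h : ∀ t : ℝ≥0, (t : ℝ≥0∞) ≤ collisionTime u k → (t : ℝ≥0∞) ≤ collisionTime w k →
      u t = w t) :
    collisionTime w k ≤ collisionTime u k := by
  by_contra! hlt
  have hne : collisionTime u k ≠ ⊤ := ne_top_of_lt hlt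
  have ht₀ : ((collisionTime u k).toNNReal : ℝ≥0∞) = collisionTime u k :=
    ENNReal.coe_toNNReal hne
  have hw_le : collisionTime w k ≤ (collisionTime u k).toNNReal := collisionTime_le <| by
    rw [← h _ ht₀.le (ht₀ ▸ hlt.le)]
    exact numValues_collisionTime_le hu hne
  exact (ht₀ ▸ hw_le).not_gt hlt

lemma eqOn_of_eqOn_collisionTime_succ (hu : FollowsProjFlow c ℓ u) (hw : FollowsProjFlow c ℓ w)
    {k : ℕ} (hτ : collisionTime u (k + 1) = collisionTime w (k + 1))
    (heq : ∀ t : ℝ≥0, (t : ℝ≥0∞) ≤ collisionTime w (k + 1) → u t = w t) (t : ℝ≥0)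
    (htu : (t : ℝ≥0∞) ≤ collisionTime u k) (htw : (t : ℝ≥0∞) ≤ collisionTime w k) :
    u t = w t := by
  by_cases ht : (t : ℝ≥0∞) ≤ collisionTime w (k + 1)
  · exact heq t ht
  set s := (collisionTime w (k + 1)).toNNReal
  have hs : (s : ℝ≥0∞) = collisionTime w (k + 1) :=
    ENNReal.coe_toNNReal (ne_top_of_lt (not_le.1 ht))
  have hst : s ≤ t := by rw [← ENNReal.coe_le_coe, hs]; exact (not_le.1 ht).le
  rw [hu k s t (hs.trans hτ.symm) hst htu, hw k s t hs hst htw, heq s hs.le]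

theorem eq_of_followsProjFlow [Nonempty ι] (hu : Continuous u) (hw : Continuous w)
    (h0 : u 0 = w 0) (hu' : FollowsProjFlow c ℓ u) (hw' : FollowsProjFlow c ℓ w) : u = w := by
  let P : ℕ → Prop := fun k => collisionTime u k = collisionTime w k ∧
    ∀ t : ℝ≥0, (t : ℝ≥0∞) ≤ collisionTime w k → u t = w t
  have base : P (Fintype.card ι) := by
    refine ⟨by rw [collisionTime_card, collisionTime_card], fun t ht => ?_⟩
    rw [collisionTime_card, nonpos_iff_eq_zero, ENNReal.coe_eq_zero] at ht
    rw [ht, h0]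
  have step : ∀ k, P (k + 1) → P k := fun k ⟨hτ, heq⟩ => by
    have hagree := eqOn_of_eqOn_collisionTime_succ hu' hw' hτ heq
    have hτk : collisionTime u k = collisionTime w k := le_antisymm
      (collisionTime_le_of_eqOn hw fun t htw htu => (hagree t htu htw).symm)
      (collisionTime_le_of_eqOn hu hagree)
    exact ⟨hτk, fun t ht => hagree t (hτk ▸ ht) ht⟩
  have hP0 : P 0 := Nat.decreasingInduction (motive := fun k _ => P k)
    (fun k _ => step k) base (Nat.zero_le _)
  exact funext fun t => hP0.2 t (by simp [collisionTime_zero])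

theorem eq_of_integral_eq [Nonempty ι] {v : ι → ℝ} (hu : Continuous u) (hw : Continuous w)
    (hu' : ∀ t, u t = v + projIntegral c ℓ u t) (hw' : ∀ t, w t = v + projIntegral c ℓ w t) :
    u = w :=
  eq_of_followsProjFlow hu hw (by rw [hu' 0, hw' 0, projIntegral_zero, projIntegral_zero])
    (followsProjFlow_of_integral_eq hu') (followsProjFlow_of_integral_eq hw')

end IntegralEquation

lemma Finset.exists_measurable_eqOn {α : Type*} [MeasurableSpace α] [MeasurableSingletonClass α]
    (S : Finset α) (ψ : α → ℝ) : ∃ φ : α → ℝ, Measurable φ ∧ ∀ x ∈ S, φ x = ψ x :=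
  ⟨fun r => ∑ x ∈ S, ({x} : Set α).indicator (fun _ => ψ x) r,
    Finset.measurable_sum _ fun x _ => measurable_const.indicator (measurableSet_singleton x),
    fun x hx => by
      dsimp only
      rw [Finset.sum_eq_single_of_mem x hx fun y _ hyx =>
        Set.indicator_of_notMem (s := {y}) hyx.symm _]
      simp⟩

section StepFunctions

open Finset

variable {n : ℕ} {a : Fin (n + 1) → ℝ}

variable (n a) in
noncomputable def stepL : (Fin n → ℝ) →ₗ[ℝ] Lp ℝ 2 μ01 :=
  Fintype.linearCombination ℝ (indJ n a)

variable (a) in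
/-- `repG n a h` unfolds to `stepFun a (coefJ n a h)`. -/
noncomputable def stepFun (d : Fin n → ℝ) (u : ℝ) : ℝ :=
  ∑ j : Fin n, Set.indicator (Set.Ico (a j.castSucc) (a j.succ)) (fun _ => d j) u

variable (a) in
def lenJ (j : Fin n) : ℝ := a j.succ - a j.castSucc

lemma gstep_eq_stepL (v : Fin n → ℝ) : gstep n a v = stepL n a v := rfl

lemma mem_Vg_iff {h : Lp ℝ 2 μ01} : h ∈ Vg n a ↔ ∃ d, stepL n a d = h := by
  rw [Vg, ← Fintype.range_linearCombination, LinearMap.mem_range]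
  rfl

lemma continuous_stepL : Continuous (stepL n a) :=
  (stepL n a).continuous_of_finiteDimensional

lemma continuous_coefJ (y : C(ℝ≥0, Lp ℝ 2 μ01)) : Continuous fun t => coefJ n a (y t) :=
  continuous_pi fun _ => (y.continuous.inner continuous_const).div_const _

lemma coeFn_stepL (d : Fin n → ℝ) : ⇑(stepL n a d) =ᵐ[μ01] stepFun a d := by
  filter_upwards [Lp.coeFn_fun_finsetSum univ fun j => d j • indJ n a j,
    ae_all_iff.2 fun j => Lp.coeFn_smul (d j) (indJ n a j),
    ae_all_iff.2 fun j : Fin n => (indicatorConstLp_coeFn (p := 2) (μ := μ01) (c := (1 : ℝ))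
      (hs := measurableSet_Ico (a := a j.castSucc) (b := a j.succ)) (hμs := μ01_ne_top _) :)]
    with u hsum hsmul hind
  simp only [stepL, Fintype.linearCombination_apply, hsum, stepFun, hsmul, Pi.smul_apply]
  refine sum_congr rfl fun j _ => ?_
  rw [indJ, indL2, hind j]
  by_cases hu : u ∈ Set.Ico (a j.castSucc) (a j.succ) <;> simp [hu]

lemma stepFun_eq_of_mem (ha : Monotone a) (d : Fin n → ℝ) {u : ℝ} {j : Fin n}
    (hu : u ∈ Set.Ico (a j.castSucc) (a j.succ)) : stepFun a d u = d j := by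
  rw [stepFun, sum_eq_single j (fun i _ hij => Set.indicator_of_notMem
    (fun hi => hij (eq_of_mem_Ico_castSucc_succ ha hi hu)) _) (by simp)]
  exact Set.indicator_of_mem hu _

lemma repG_eq_of_mem (ha : Monotone a) (h : Lp ℝ 2 μ01) {u : ℝ} {j : Fin n}
    (hu : u ∈ Set.Ico (a j.castSucc) (a j.succ)) : repG n a h u = coefJ n a h j :=
  stepFun_eq_of_mem ha _ hu

lemma ae_exists_mem_Ico (ha0 : a 0 = 0) (ha1 : a (Fin.last n) = 1) :
    ∀ᵐ u ∂μ01, ∃ j : Fin n, u ∈ Set.Ico (a j.castSucc) (a j.succ) := by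
  have hne : ∀ᵐ u ∂μ01, u ≠ 1 := ae_restrict_of_ae (Measure.ae_ne volume 1)
  filter_upwards [ae_restrict_mem measurableSet_Icc, hne] with u hu hu1
  exact exists_mem_Ico_castSucc_succ (by rw [ha0, ha1]; exact ⟨hu.1, lt_of_le_of_ne hu.2 hu1⟩)

lemma comp_stepFun_ae_eq (ha : Monotone a) (ha0 : a 0 = 0) (ha1 : a (Fin.last n) = 1)
    (φ : ℝ → ℝ) (d : Fin n → ℝ) : φ ∘ stepFun a d =ᵐ[μ01] stepFun a (φ ∘ d) := by
  filter_upwards [ae_exists_mem_Ico ha0 ha1] with u ⟨j, hj⟩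
  simp only [Function.comp_apply, stepFun_eq_of_mem ha _ hj]

end StepFunctions

section Projection

open Finset

variable {n : ℕ} {a : Fin (n + 1) → ℝ}

lemma lenJ_pos (ha : StrictMono a) (j : Fin n) : 0 < lenJ a j :=
  sub_pos.2 (ha j.castSucc_lt_succ)

lemma measureReal_Ico (ha : Monotone a) (ha0 : a 0 = 0) (ha1 : a (Fin.last n) = 1)
    (j : Fin n) : μ01.real (Set.Ico (a j.castSucc) (a j.succ)) = lenJ a j := by
  have hsub : Set.Ico (a j.castSucc) (a j.succ) ⊆ Set.Icc 0 1 := fun u hu =>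
    ⟨ha0 ▸ (ha (Fin.zero_le _)).trans hu.1, ha1 ▸ hu.2.le.trans (ha (Fin.le_last _))⟩
  rw [μ01, measureReal_restrict_apply measurableSet_Ico, Set.inter_eq_self_of_subset_left hsub,
    Real.volume_real_Ico_of_le (ha j.castSucc_lt_succ.le), lenJ]

variable (ha : StrictMono a) (ha0 : a 0 = 0) (ha1 : a (Fin.last n) = 1)
include ha ha0 ha1

lemma inner_indJ (i j : Fin n) :
    inner ℝ (indJ n a i) (indJ n a j) = if i = j then lenJ a j else 0 := by
  rw [indJ, indJ, indL2, indL2, L2.inner_indicatorConstLp_indicatorConstLp _ _ (μ01_ne_top _)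
    (μ01_ne_top _)]
  split_ifs with hij
  · simp [hij, measureReal_Ico ha.monotone ha0 ha1]
  · rw [Set.disjoint_iff_inter_eq_empty.1 (Set.disjoint_left.2 fun u hi hj =>
      hij (eq_of_mem_Ico_castSucc_succ ha.monotone hi hj))]
    simp

lemma inner_stepL_indJ (d : Fin n → ℝ) (j : Fin n) :
    inner ℝ (stepL n a d) (indJ n a j) = d j * lenJ a j := by
  simp [stepL, Fintype.linearCombination_apply, sum_inner, real_inner_smul_left,
    inner_indJ ha ha0 ha1]

lemma coefJ_stepL (d : Fin n → ℝ) : coefJ n a (stepL n a d) = d := by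
  ext j
  rw [coefJ, inner_stepL_indJ ha ha0 ha1]
  exact mul_div_cancel_right₀ _ (lenJ_pos ha j).ne'

lemma stepL_injective : Function.Injective (stepL n a) :=
  Function.LeftInverse.injective (coefJ_stepL ha ha0 ha1)

lemma stepL_coefJ {h : Lp ℝ 2 μ01} (hh : h ∈ Vg n a) : stepL n a (coefJ n a h) = h := by
  obtain ⟨d, rfl⟩ := mem_Vg_iff.1 hh
  rw [coefJ_stepL ha ha0 ha1]

lemma inner_stepL_stepL (d e : Fin n → ℝ) :
    inner ℝ (stepL n a d) (stepL n a e) = ∑ j, lenJ a j * d j * e j := by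
  rw [show stepL n a e = ∑ j, e j • indJ n a j from rfl, inner_sum]
  simp only [real_inner_smul_right, inner_stepL_indJ ha ha0 ha1]
  exact sum_congr rfl fun j _ => by ring

lemma L2of_stepL (ω : Fin n → ℝ) :
    L2of (stepL n a ω) = LinearMap.range ((stepL n a).comp (LinearMap.funLeft ℝ ℝ ω)) := by
  have hcomp := comp_stepFun_ae_eq ha.monotone ha0 ha1
  ext h
  constructor
  · rintro ⟨f₀, φ, hf₀, -, hh⟩
    refine ⟨φ, Lp.ext ?_⟩
    calc ⇑(stepL n a (φ ∘ ω)) =ᵐ[μ01] stepFun a (φ ∘ ω) := coeFn_stepL _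
      _ =ᵐ[μ01] φ ∘ stepFun a ω := (hcomp φ ω).symm
      _ =ᵐ[μ01] φ ∘ f₀ := ((coeFn_stepL ω).symm.trans hf₀).fun_comp φ
      _ =ᵐ[μ01] h := hh.symm
  · rintro ⟨ψ, rfl⟩
    obtain ⟨φ, hφ, hφψ⟩ := (univ.image ω).exists_measurable_eqOn ψ
    have hφω : φ ∘ ω = ψ ∘ ω := funext fun j => hφψ _ (mem_image_of_mem ω (mem_univ j))
    refine ⟨stepFun a ω, φ, coeFn_stepL ω, hφ, ?_⟩
    calc ⇑(stepL n a (ψ ∘ ω)) =ᵐ[μ01] stepFun a (ψ ∘ ω) := coeFn_stepL _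
      _ = stepFun a (φ ∘ ω) := by rw [hφω]
      _ =ᵐ[μ01] φ ∘ stepFun a ω := (hcomp φ ω).symm

lemma L2mod_stepL (ω : Fin n → ℝ) :
    L2mod (stepL n a ω) = LinearMap.range ((stepL n a).comp (LinearMap.funLeft ℝ ℝ ω)) := by
  have : FiniteDimensional ℝ (LinearMap.range ((stepL n a).comp (LinearMap.funLeft ℝ ℝ ω))) :=
    Submodule.finiteDimensional_of_le (LinearMap.range_comp_le_range _ _)
  rw [L2mod, L2of_stepL ha ha0 ha1, Submodule.span_eq]
  exact (Submodule.closed_of_finiteDimensional _).submodule_topologicalClosure_eq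

lemma prL_stepL (ω d : Fin n → ℝ) :
    prL (stepL n a ω) (stepL n a d) = stepL n a (blockAvg (lenJ a) ω d) := by
  have : CompleteSpace (L2mod (stepL n a ω)) :=
    (Submodule.isClosed_topologicalClosure _).completeSpace_coe
  change ((L2mod (stepL n a ω)).orthogonalProjectionOnto (stepL n a d) : Lp ℝ 2 μ01) = _
  rw [← Submodule.starProjection_apply]
  refine Submodule.eq_starProjection_of_mem_of_inner_eq_zero ?_ fun z hz => ?_
  · rw [L2mod_stepL ha ha0 ha1]
    exact ⟨levelAvg (lenJ a) ω d, rfl⟩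
  · rw [L2mod_stepL ha ha0 ha1] at hz
    obtain ⟨ψ, rfl⟩ := hz
    rw [← map_sub, LinearMap.comp_apply, inner_stepL_stepL ha ha0 ha1]
    exact sum_mul_sub_blockAvg_mul_eq_zero _ (lenJ_pos ha) ω d ψ

end Projection

section Coordinates

variable {n : ℕ} {a : Fin (n + 1) → ℝ} (ha : StrictMono a) (ha0 : a 0 = 0)
  (ha1 : a (Fin.last n) = 1)
include ha ha0 ha1

lemma tmin_eq_stoppedTime {y : C(ℝ≥0, Lp ℝ 2 μ01)} {u : ℝ≥0 → Fin n → ℝ}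
    (hyu : ∀ t, y t = stepL n a (u t)) (k : ℕ) (t : ℝ≥0) :
    tmin n a y k t = stoppedTime u k t := by
  have hu : (fun t => coefJ n a (y t)) = u := funext fun t => by rw [hyu, coefJ_stepL ha ha0 ha1]
  rw [← hu]
  rfl

lemma gstep_add_sum_prL_eq {y x : C(ℝ≥0, Lp ℝ 2 μ01)} {u c : ℝ≥0 → Fin n → ℝ}
    (hyu : ∀ t, y t = stepL n a (u t)) (hxc : ∀ t, x t = stepL n a (c t)) (v : Fin n → ℝ)
    (t : ℝ≥0) :
    gstep n a v + ∑ k : Fin n,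
        (prL (y (tmin n a y ((k : ℕ) + 1) t)) (x (tmin n a y (k : ℕ) t)) -
         prL (y (tmin n a y ((k : ℕ) + 1) t)) (x (tmin n a y ((k : ℕ) + 1) t)))
      = stepL n a (v + projIntegral c (lenJ a) u t) := by
  simp only [tmin_eq_stoppedTime ha ha0 ha1 hyu, hyu, hxc, prL_stepL ha ha0 ha1, ← map_sub]
  rw [Fin.sum_univ_eq_sum_range (fun k => stepL n a (blockAvg (lenJ a) (u (stoppedTime u (k + 1) t))
    (c (stoppedTime u k t) - c (stoppedTime u (k + 1) t)))), projIntegral, Fintype.card_fin,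
    map_add, map_sum, gstep_eq_stepL]

lemma exists_mem_Ioo_mem_Ico (j : Fin n) :
    ∃ p ∈ Set.Ioo (0 : ℝ) 1, p ∈ Set.Ico (a j.castSucc) (a j.succ) := by
  have hlt := ha j.castSucc_lt_succ
  have h0 : 0 ≤ a j.castSucc := ha0 ▸ ha.monotone (Fin.zero_le _)
  have h1 : a j.succ ≤ 1 := ha1 ▸ ha.monotone (Fin.le_last _)
  exact ⟨(a j.castSucc + a j.succ) / 2, ⟨by linarith, by linarith⟩, by linarith, by linarith⟩

lemma repG_coalescing_iff {y : C(ℝ≥0, Lp ℝ 2 μ01)} {u : ℝ≥0 → Fin n → ℝ}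
    (hyu : ∀ t, y t = stepL n a (u t)) :
    (∀ p q : ℝ, p ∈ Set.Ioo (0 : ℝ) 1 → q ∈ Set.Ioo (0 : ℝ) 1 → ∀ s t : ℝ≥0, s ≤ t →
        repG n a (y s) p = repG n a (y s) q → repG n a (y t) p = repG n a (y t) q) ↔
      ∀ s t, s ≤ t → Function.FactorsThrough (u t) (u s) := by
  have hval : ∀ r p j, p ∈ Set.Ico (a j.castSucc) (a j.succ) → repG n a (y r) p = u r j :=
    fun r p j hp => by rw [repG_eq_of_mem ha.monotone _ hp, hyu, coefJ_stepL ha ha0 ha1]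
  have hcover : ∀ p ∈ Set.Ioo (0 : ℝ) 1, ∃ j : Fin n, p ∈ Set.Ico (a j.castSucc) (a j.succ) :=
    fun p hp => exists_mem_Ico_castSucc_succ (by rw [ha0, ha1]; exact Set.Ioo_subset_Ico_self hp)
  constructor
  · intro h s t hst i j hij
    obtain ⟨p, hp, hpi⟩ := exists_mem_Ioo_mem_Ico ha ha0 ha1 i
    obtain ⟨q, hq, hqj⟩ := exists_mem_Ioo_mem_Ico ha ha0 ha1 j
    have := h p q hp hq s t hst (by rw [hval s p i hpi, hval s q j hqj, hij])
    rwa [hval t p i hpi, hval t q j hqj] at this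
  · intro h p q hp hq s t hst hpq
    obtain ⟨i, hpi⟩ := hcover p hp
    obtain ⟨j, hqj⟩ := hcover q hq
    rw [hval s p i hpi, hval s q j hqj] at hpq
    rw [hval t p i hpi, hval t q j hqj, h s t hst hpq]

lemma mem_CoalEx_and_eq_iff {y x : C(ℝ≥0, Lp ℝ 2 μ01)} {u c : ℝ≥0 → Fin n → ℝ}
    (hyu : ∀ t, y t = stepL n a (u t)) (hxc : ∀ t, x t = stepL n a (c t)) (v : Fin n → ℝ) :
    (y ∈ CoalEx n a v ∧ ∀ t : ℝ≥0, y t = gstep n a v + ∑ k : Fin n,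
        (prL (y (tmin n a y ((k : ℕ) + 1) t)) (x (tmin n a y (k : ℕ) t)) -
         prL (y (tmin n a y ((k : ℕ) + 1) t)) (x (tmin n a y ((k : ℕ) + 1) t)))) ↔
      (∀ s t, s ≤ t → Function.FactorsThrough (u t) (u s)) ∧
        ∀ t, u t = v + projIntegral c (lenJ a) u t := by
  simp_rw [gstep_add_sum_prL_eq ha ha0 ha1 hyu hxc, hyu, (stepL_injective ha ha0 ha1).eq_iff]
  constructor
  · rintro ⟨⟨-, -, hcoal⟩, heq⟩
    exact ⟨(repG_coalescing_iff ha ha0 ha1 hyu).1 hcoal, heq⟩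
  · rintro ⟨hcoal, heq⟩
    refine ⟨⟨fun t => mem_Vg_iff.2 ⟨_, (hyu t).symm⟩, ?_,
      (repG_coalescing_iff ha ha0 ha1 hyu).2 hcoal⟩, heq⟩
    rw [hyu, heq 0, projIntegral_zero, add_zero, gstep_eq_stepL]

end Coordinates

theorem stmt15_general (n : ℕ) (v : Fin n → ℝ)
    (a : Fin (n + 1) → ℝ) (ha : StrictMono a) (ha0 : a 0 = 0) (ha1 : a (Fin.last n) = 1)
    (x : C(ℝ≥0, Lp ℝ 2 μ01)) (hx : ∀ t : ℝ≥0, x t ∈ Vg n a) :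
    ∃! y : C(ℝ≥0, Lp ℝ 2 μ01), y ∈ CoalEx n a v ∧
      ∀ t : ℝ≥0, y t = gstep n a v +
        ∑ k : Fin n,
          (prL (y (tmin n a y ((k : ℕ) + 1) t)) (x (tmin n a y (k : ℕ) t)) -
           prL (y (tmin n a y ((k : ℕ) + 1) t)) (x (tmin n a y ((k : ℕ) + 1) t))) := by
  have : Nonempty (Fin n) := ⟨⟨0, Nat.pos_of_ne_zero fun hn => by subst hn; simp_all⟩⟩
  have hxc : ∀ t, x t = stepL n a (coefJ n a (x t)) := fun t => (stepL_coefJ ha ha0 ha1 (hx t)).symm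
  obtain ⟨u, hu, hcoal, heq⟩ :=
    exists_coalescing_integral_solution (ℓ := lenJ a) (continuous_coefJ x) v
  refine ⟨⟨fun t => stepL n a (u t), continuous_stepL.comp hu⟩,
    (mem_CoalEx_and_eq_iff ha ha0 ha1 (fun t => rfl) hxc v).2 ⟨hcoal, heq⟩, fun y hy => ?_⟩
  have hyu : ∀ t, y t = stepL n a (coefJ n a (y t)) := fun t =>
    (stepL_coefJ ha ha0 ha1 (hy.1.1 t)).symm
  have hyeq := ((mem_CoalEx_and_eq_iff ha ha0 ha1 hyu hxc v).1 hy).2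
  have huy := eq_of_integral_eq (continuous_coefJ y) hu hyeq heq
  ext1 t
  exact (hyu t).trans (congrArg (stepL n a) (congrFun huy t))

/-- For a nondecreasing step function `g = Σ_j v_j 1_{[a_{j-1},a_j)}`
and every continuous `x : [0,∞) → L2(g)` there is a unique `y ∈ Coal_ex(g)` with
`y_t = g + ∫_0^t pr_{y_s} dx_s` for all `t ≥ 0`, the integral being the finite sum
`Σ_{k=1}^n (pr_{y_{τ_k ∧ t}} x_{τ_{k-1} ∧ t} − pr_{y_{τ_k ∧ t}} x_{τ_k ∧ t})`. -/
theorem stmt15 (n : ℕ) (hn : 0 < n) (v : Fin n → ℝ) (hv : StrictMono v)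
    (a : Fin (n + 1) → ℝ) (ha : StrictMono a) (ha0 : a 0 = 0) (ha1 : a (Fin.last n) = 1)
    (x : C(ℝ≥0, Lp ℝ 2 μ01)) (hx : ∀ t : ℝ≥0, x t ∈ Vg n a) :
    ∃! y : C(ℝ≥0, Lp ℝ 2 μ01), y ∈ CoalEx n a v ∧
      ∀ t : ℝ≥0, y t = gstep n a v +
        ∑ k : Fin n,
          (prL (y (tmin n a y ((k : ℕ) + 1) t)) (x (tmin n a y (k : ℕ) t)) -
           prL (y (tmin n a y ((k : ℕ) + 1) t)) (x (tmin n a y ((k : ℕ) + 1) t))) :=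
  stmt15_general n v a ha ha0 ha1 x hx
end

section
/- Let (B_j)_{j≥1} be a sequence of independent standard Brownian motions started at 0, and let (α_j^n)_{j,n≥1} be nonnegative real numbers such that for every j ≥ 1, α_j^n → ∞ as n → ∞. For each n, j define the Ornstein–Uhlenbeck process ξ_j^n pathwise by ξ_j^n(t) := B_j(t) − α_j^n ∫_0^t e^{−α_j^n (t−s)} B_j(s) ds for 0 ≤ t ≤ n, and ξ_j^n(t) := ξ_j^n(n) + B_j(t) − B_j(n) for t ≥ n (this is the strong solution of dξ = −α_j^n 1_{t≤n} ξ dt + dB_j, ξ(0) = 0). Then the sequence ξ^n := (ξ_j^n)_{j≥1} converges in distribution to 0 in the countable product space C([0,∞),ℝ)^ℕ. -/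
open MeasureTheory ProbabilityTheory Filter Topology
open scoped NNReal

/-- A standard Brownian motion started at `0`: continuous paths starting at `0`,
independent increments, increments over `[s,t]` centered Gaussian of variance `t − s`. -/
structure IsStandardBM {Ω : Type*} [MeasurableSpace Ω] (P : Measure Ω)
    (w : ℝ≥0 → Ω → ℝ) : Prop where
  start : ∀ ω, w 0 ω = 0
  cont : ∀ ω, Continuous fun t => w t ω
  meas : ∀ t, Measurable (w t)
  indep : ∀ (n : ℕ) (t : Fin (n + 1) → ℝ≥0), Monotone t →
    iIndepFun
      (fun i : Fin n => fun ω => w (t i.succ) ω - w (t i.castSucc) ω) P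
  gauss : ∀ s t : ℝ≥0, s ≤ t →
    P.map (fun ω => w t ω - w s ω) = gaussianReal 0 (t - s)

/-- The pathwise Ornstein–Uhlenbeck transform: the strong solution of
`dξ = −α 1_{t ≤ T} ξ dt + db`, `ξ(0)=0`, namely
`ξ(t) = b(t) − α ∫_0^{t∧T} e^{−α((t∧T)−s)} b(s) ds`
(which agrees with `b(t) − α∫_0^t e^{−α(t−s)} b(s) ds` for `t ≤ T` and with
`ξ(T) + b(t) − b(T)` for `t ≥ T`). -/
noncomputable def ouPath (α T : ℝ) (b : ℝ≥0 → ℝ) (t : ℝ≥0) : ℝ :=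
  b t - α * ∫ s in (0 : ℝ)..(min (t : ℝ) T),
    Real.exp (-α * (min (t : ℝ) T - s)) * b s.toNNReal

/-!
The convergence holds for every `ω`, not only in distribution. Put `c s = b (s⁺)`, so `c 0 = 0`.
For `t ≤ T` the Ornstein–Uhlenbeck transform of `b` is
`c t e^{-αt} + ∫₀ᵗ α e^{-α(t-s)} (c t - c s) ds`, and the kernel `α e^{-α(t-s)}` has mass at most
`1` and concentrates at `s = t` as `α → ∞`; by uniform continuity of `c` on `[0, T₀]` the transform
tends to `0` uniformly on `[0, T₀]`. Hence `ξⁿ ω → 0` in `C(ℝ≥0, ℝ)^ℕ` for every `ω`, and dominated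
convergence gives `∫ F (ξⁿ) dP → F 0`. Measurability of `ξⁿ` comes from the fact that
`f ↦ f|_D`, for a countable dense `D`, is a continuous injection of the Polish space `C(ℝ≥0, ℝ)`,
hence a measurable embedding.
-/

open Set Real

section ExponentialKernel

variable (A τ : ℝ)

theorem integral_mul_exp_neg_mul_sub (u v : ℝ) :
    ∫ s in u..v, A * exp (-A * (τ - s)) = exp (-A * (τ - v)) - exp (-A * (τ - u)) := by
  refine intervalIntegral.integral_eq_sub_of_hasDerivAt (f := fun s => exp (-A * (τ - s)))
    (fun s _ => ?_)
    ((by fun_prop : Continuous fun s => A * exp (-A * (τ - s))).intervalIntegrable _ _)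
  simpa [mul_comm] using (((hasDerivAt_id s).const_sub τ).const_mul (-A)).exp

variable {A}

theorem abs_integral_mul_exp_neg_mul_sub_mul_le (hA : 0 ≤ A) {u v C : ℝ} (huv : u ≤ v)
    {f : ℝ → ℝ} (hf : Continuous f) (hfC : ∀ s ∈ Icc u v, |f s| ≤ C) :
    |∫ s in u..v, A * exp (-A * (τ - s)) * f s| ≤ C * exp (-A * (τ - v)) := by
  have hC : 0 ≤ C := (abs_nonneg _).trans (hfC u ⟨le_rfl, huv⟩)
  have hkernel : ∀ s, 0 ≤ A * exp (-A * (τ - s)) := fun s => by positivity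
  calc |∫ s in u..v, A * exp (-A * (τ - s)) * f s|
      ≤ ∫ s in u..v, |A * exp (-A * (τ - s)) * f s| :=
        intervalIntegral.abs_integral_le_integral_abs huv
    _ ≤ ∫ s in u..v, C * (A * exp (-A * (τ - s))) := by
        refine intervalIntegral.integral_mono_on huv
          ((by fun_prop : Continuous _).intervalIntegrable _ _)
          ((by fun_prop : Continuous _).intervalIntegrable _ _) fun s hs => ?_
        rw [abs_mul, abs_of_nonneg (hkernel s), mul_comm C]
        exact mul_le_mul_of_nonneg_left (hfC s hs) (hkernel s)
    _ = C * (exp (-A * (τ - v)) - exp (-A * (τ - u))) := by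
        rw [intervalIntegral.integral_const_mul, integral_mul_exp_neg_mul_sub]
    _ ≤ C * exp (-A * (τ - v)) := by
        gcongr
        exact sub_le_self _ (exp_nonneg _)

variable (A)

theorem sub_mul_integral_exp_neg_mul_sub_eq {c : ℝ → ℝ} (hc : Continuous c) :
    c τ - A * ∫ s in (0 : ℝ)..τ, exp (-A * (τ - s)) * c s
      = c τ * exp (-A * τ) + ∫ s in (0 : ℝ)..τ, A * exp (-A * (τ - s)) * (c τ - c s) := by
  have hsplit : ∫ s in (0 : ℝ)..τ, A * exp (-A * (τ - s)) * (c τ - c s)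
      = c τ * (∫ s in (0 : ℝ)..τ, A * exp (-A * (τ - s)))
        - A * ∫ s in (0 : ℝ)..τ, exp (-A * (τ - s)) * c s := by
    have hintegrand : ∀ s, A * exp (-A * (τ - s)) * (c τ - c s)
        = c τ * (A * exp (-A * (τ - s))) - A * (exp (-A * (τ - s)) * c s) := fun s => by ring
    simp_rw [hintegrand]
    rw [intervalIntegral.integral_sub ((by fun_prop : Continuous _).intervalIntegrable _ _)
      ((by fun_prop : Continuous _).intervalIntegrable _ _)]
    simp only [intervalIntegral.integral_const_mul]
  rw [hsplit, integral_mul_exp_neg_mul_sub A τ 0 τ]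
  simp only [sub_self, mul_zero, exp_zero, sub_zero]
  ring

variable {A τ}

/-- The oscillation of `c` within `δ` of `τ` contributes `2η`; the rest of the integral and the
boundary term `c τ e^{-Aτ}` are at most `3 M e^{-Aδ}`. -/
theorem abs_sub_mul_integral_exp_neg_mul_sub_le {c : ℝ → ℝ} (hc : Continuous c) (hc0 : c 0 = 0)
    (hA : 0 ≤ A) (hτ : 0 ≤ τ) {δ η M : ℝ} (hδ : 0 ≤ δ)
    (hη : ∀ s ∈ Icc 0 τ, τ - s ≤ δ → |c τ - c s| ≤ η) (hM : ∀ s ∈ Icc 0 τ, |c s| ≤ M) :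
    |c τ - A * ∫ s in (0 : ℝ)..τ, exp (-A * (τ - s)) * c s| ≤ 2 * η + 3 * M * exp (-A * δ) := by
  have hτmem : τ ∈ Icc 0 τ := ⟨hτ, le_rfl⟩
  have hη0 : 0 ≤ η := by simpa using hη τ hτmem (by simpa using hδ)
  have hM0 : 0 ≤ M := (abs_nonneg _).trans (hM τ hτmem)
  have hosc : Continuous fun s => c τ - c s := by fun_prop
  have hexpδ : 0 < exp (-A * δ) := exp_pos _
  rw [sub_mul_integral_exp_neg_mul_sub_eq A τ hc]
  rcases le_or_gt τ δ with hτδ | hδτ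
  · have hboundary : |c τ * exp (-A * τ)| ≤ η := by
      have hcτ : |c τ| ≤ η := by simpa [hc0] using hη 0 ⟨le_rfl, hτ⟩ (by simpa using hτδ)
      rw [abs_mul, abs_of_pos (exp_pos _)]
      calc |c τ| * exp (-A * τ) ≤ η * 1 :=
            mul_le_mul hcτ (exp_le_one_iff.2 (by nlinarith)) (exp_pos _).le hη0
        _ = η := mul_one η
    have hintegral : |∫ s in (0 : ℝ)..τ, A * exp (-A * (τ - s)) * (c τ - c s)| ≤ η := by
      simpa using abs_integral_mul_exp_neg_mul_sub_mul_le τ hA hτ hosc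
        fun s hs => hη s hs (by linarith [hs.1])
    calc _ ≤ |c τ * exp (-A * τ)| + |∫ s in (0 : ℝ)..τ, A * exp (-A * (τ - s)) * (c τ - c s)| :=
          abs_add_le _ _
      _ ≤ 2 * η + 3 * M * exp (-A * δ) := by nlinarith
  · have hboundary : |c τ * exp (-A * τ)| ≤ M * exp (-A * δ) := by
      rw [abs_mul, abs_of_pos (exp_pos _)]
      exact mul_le_mul (hM τ hτmem) (exp_le_exp.2 (by nlinarith)) (exp_pos _).le hM0
    have hfar : |∫ s in (0 : ℝ)..τ - δ, A * exp (-A * (τ - s)) * (c τ - c s)|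
        ≤ 2 * M * exp (-A * δ) := by
      simpa using abs_integral_mul_exp_neg_mul_sub_mul_le τ hA (u := 0) (v := τ - δ)
        (by linarith) hosc fun s hs => (abs_sub _ _).trans (by
          linarith [hM τ hτmem, hM s ⟨hs.1, by linarith [hs.2]⟩])
    have hnear : |∫ s in τ - δ..τ, A * exp (-A * (τ - s)) * (c τ - c s)| ≤ η := by
      simpa using abs_integral_mul_exp_neg_mul_sub_mul_le τ hA (by linarith) hosc
        fun s hs => hη s ⟨by linarith [hs.1], hs.2⟩ (by linarith [hs.1])
    have hintegrand : Continuous fun s => A * exp (-A * (τ - s)) * (c τ - c s) := by fun_prop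
    rw [← intervalIntegral.integral_add_adjacent_intervals (b := τ - δ)
      (hintegrand.intervalIntegrable _ _) (hintegrand.intervalIntegrable _ _)]
    calc _ ≤ |c τ * exp (-A * τ)|
          + (|∫ s in (0 : ℝ)..τ - δ, A * exp (-A * (τ - s)) * (c τ - c s)|
            + |∫ s in τ - δ..τ, A * exp (-A * (τ - s)) * (c τ - c s)|) :=
          (abs_add_le _ _).trans (add_le_add_right (abs_add_le _ _) _)
      _ ≤ 2 * η + 3 * M * exp (-A * δ) := by linarith

end ExponentialKernel

theorem ouPath_of_le (α : ℝ) {T : ℝ} (b : ℝ≥0 → ℝ) {t : ℝ≥0} (ht : (t : ℝ) ≤ T) :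
    ouPath α T b t
      = b t - α * ∫ s in (0 : ℝ)..t, exp (-α * (t - s)) * b s.toNNReal := by
  rw [ouPath, min_eq_left ht]

theorem tendstoLocallyUniformly_ouPath {ι : Type*} {l : Filter ι} {b : ℝ≥0 → ℝ}
    (hb : Continuous b) (hb0 : b 0 = 0) {a T : ι → ℝ} (ha : Tendsto a l atTop)
    (hT : Tendsto T l atTop) :
    TendstoLocallyUniformly (fun i => ouPath (a i) (T i) b) 0 l := by
  rw [tendstoLocallyUniformly_iff_forall_isCompact]
  intro K hK
  obtain ⟨T₀, hT₀⟩ := hK.bddAbove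
  set c : ℝ → ℝ := fun s => b s.toNNReal
  have hc : Continuous c := hb.comp continuous_real_toNNReal
  have hIcc : IsCompact (Icc 0 (T₀ : ℝ)) := isCompact_Icc
  obtain ⟨M, hM⟩ := hIcc.exists_bound_of_continuousOn hc.continuousOn
  rw [Metric.tendstoUniformlyOn_iff]
  intro ε hε
  obtain ⟨δ, hδ, hcδ⟩ := Metric.uniformContinuousOn_iff_le.1
    (hIcc.uniformContinuousOn_of_continuous hc.continuousOn) (ε / 4) (by positivity)
  have hsmall : Tendsto (fun i => 3 * M * exp (-a i * δ)) l (𝓝 0) := by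
    simpa using (tendsto_exp_atBot.comp
      ((tendsto_neg_atTop_atBot.comp ha).atBot_mul_const hδ)).const_mul (3 * M)
  filter_upwards [ha.eventually_ge_atTop 0, hT.eventually_ge_atTop (T₀ : ℝ),
    hsmall.eventually (gt_mem_nhds (by positivity : 0 < ε / 2))] with i hai hTi hi t ht
  have htT₀ : (t : ℝ) ≤ T₀ := hT₀ ht
  rw [Pi.zero_apply, dist_zero_left, Real.norm_eq_abs, ouPath_of_le _ _ (htT₀.trans hTi)]
  rw [show b t = c t by simp [c]]
  refine (abs_sub_mul_integral_exp_neg_mul_sub_le hc (by simpa [c] using hb0) hai t.coe_nonneg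
    hδ.le (η := ε / 4) (M := M) (fun s hs hsδ => ?_) fun s hs => ?_).trans_lt (by linarith)
  · simpa only [Real.dist_eq] using hcδ t ⟨t.coe_nonneg, htT₀⟩ s ⟨hs.1, hs.2.trans htT₀⟩
      (by rw [Real.dist_eq, abs_le]; constructor <;> linarith [hs.2])
  · simpa using hM s ⟨hs.1, hs.2.trans htT₀⟩

theorem measurable_ouPath {Ω : Type*} [MeasurableSpace Ω] {b : ℝ≥0 → Ω → ℝ}
    (hbc : ∀ ω, Continuous fun u => b u ω) (hbm : ∀ u, Measurable (b u)) (α T : ℝ) (t : ℝ≥0) :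
    Measurable fun ω => ouPath α T (fun u => b u ω) t := by
  set m := min (t : ℝ) T
  have hb : Measurable fun p : Ω × ℝ => b p.2.toNNReal p.1 :=
    (measurable_uncurry_of_continuous_of_measurable
      (fun ω => (hbc ω).comp continuous_real_toNNReal) fun s => hbm s.toNNReal).comp
      measurable_swap
  have hintegrand :
      StronglyMeasurable fun p : Ω × ℝ => exp (-α * (m - p.2)) * b p.2.toNNReal p.1 :=
    ((by fun_prop : Measurable fun p : Ω × ℝ => exp (-α * (m - p.2))).mul hb).stronglyMeasurable
  simp only [ouPath, intervalIntegral]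
  exact (hbm t).sub (measurable_const.mul
    (hintegrand.integral_prod_right'.measurable.sub hintegrand.integral_prod_right'.measurable))

theorem ContinuousMap.measurable_of_measurable_eval {Ω X Y : Type*} [MeasurableSpace Ω]
    [TopologicalSpace X] [TopologicalSpace.SeparableSpace X]
    [TopologicalSpace Y] [T2Space Y] [SecondCountableTopology Y]
    [MeasurableSpace Y] [BorelSpace Y]
    [PolishSpace C(X, Y)] [MeasurableSpace C(X, Y)] [BorelSpace C(X, Y)]
    {g : Ω → C(X, Y)} (hg : ∀ x, Measurable fun ω => g ω x) : Measurable g := by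
  obtain ⟨D, hDc, hD⟩ := TopologicalSpace.exists_countable_dense X
  have : Countable D := hDc.to_subtype
  have hR : MeasurableEmbedding fun (f : C(X, Y)) (x : D) => f x :=
    (continuous_pi fun x : D => continuous_eval_const (x : X)).measurableEmbedding
      fun f f' h => ContinuousMap.ext <| congrFun <|
        Continuous.ext_on hD f.continuous f'.continuous fun x hx => congrFun h ⟨x, hx⟩
  exact hR.measurable_comp_iff.mp (measurable_pi_lambda _ fun x => hg x)

theorem tendsto_integral_comp_of_forall_tendsto {Ω E : Type*} [MeasurableSpace Ω]
    {μ : Measure Ω} [IsFiniteMeasure μ] [TopologicalSpace E] [MeasurableSpace E]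
    [OpensMeasurableSpace E] (F : BoundedContinuousFunction E ℝ) {X : ℕ → Ω → E} {Y : Ω → E}
    (hX : ∀ n, Measurable (X n)) (hXY : ∀ ω, Tendsto (fun n => X n ω) atTop (𝓝 (Y ω))) :
    Tendsto (fun n => ∫ ω, F (X n ω) ∂μ) atTop (𝓝 (∫ ω, F (Y ω) ∂μ)) :=
  tendsto_integral_of_dominated_convergence (fun _ => ‖F‖)
    (fun n => (F.continuous.measurable.comp (hX n)).aestronglyMeasurable) (integrable_const _)
    (fun _ => ae_of_all _ fun _ => F.norm_coe_le_norm _)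
    (ae_of_all _ fun ω => (F.continuous.tendsto _).comp (hXY ω))

theorem stmt16_general {Ω : Type*} [MeasurableSpace Ω] (P : Measure Ω) [IsProbabilityMeasure P]
    (B : ℕ → ℝ≥0 → Ω → ℝ) (hBM : ∀ j, IsStandardBM P (B j))
    (α : ℕ → ℕ → ℝ)
    (hα : ∀ j, Tendsto (fun n => α j n) atTop atTop)
    (ξ : ℕ → Ω → ℕ → C(ℝ≥0, ℝ))
    (hξ : ∀ n ω j (t : ℝ≥0), ξ n ω j t = ouPath (α j n) (n : ℝ) (fun s => B j s ω) t) :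
    ∀ F : BoundedContinuousFunction (ℕ → C(ℝ≥0, ℝ)) ℝ,
      Tendsto (fun n => ∫ ω, F (ξ n ω) ∂P) atTop (𝓝 (F 0)) := by
  intro F
  let : MeasurableSpace C(ℝ≥0, ℝ) := borel _
  have : BorelSpace C(ℝ≥0, ℝ) := ⟨rfl⟩
  have hξ_meas : ∀ n, Measurable (ξ n) := fun n => measurable_pi_lambda _ fun j =>
    ContinuousMap.measurable_of_measurable_eval fun t => by
      simpa only [hξ] using measurable_ouPath (hBM j).cont (hBM j).meas _ _ t
  have hξ_lim : ∀ ω, Tendsto (fun n => ξ n ω) atTop (𝓝 0) := fun ω =>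
    tendsto_pi_nhds.2 fun j => by
      rw [ContinuousMap.tendsto_iff_tendstoLocallyUniformly]
      simpa only [← funext (hξ _ ω j), Pi.zero_apply, ContinuousMap.coe_zero] using
        tendstoLocallyUniformly_ouPath ((hBM j).cont ω) ((hBM j).start ω) (hα j)
          tendsto_natCast_atTop_atTop
  simpa using tendsto_integral_comp_of_forall_tendsto (μ := P) F hξ_meas hξ_lim

/-- For independent standard Brownian motions `(B_j)` and nonnegative
reals `α_j^n` with `α_j^n → ∞` as `n → ∞` for every `j`, the sequence of
Ornstein–Uhlenbeck processes `ξⁿ = (ξ_j^n)_j` converges in distribution to `0` in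
`C([0,∞),ℝ)^ℕ`. -/
theorem stmt16 {Ω : Type*} [MeasurableSpace Ω] (P : Measure Ω) [IsProbabilityMeasure P]
    (B : ℕ → ℝ≥0 → Ω → ℝ) (hBM : ∀ j, IsStandardBM P (B j))
    (hBindep : iIndepFun (fun j => fun ω => fun t => B j t ω) P)
    (α : ℕ → ℕ → ℝ) (hαnn : ∀ j n, 0 ≤ α j n)
    (hα : ∀ j, Tendsto (fun n => α j n) atTop atTop)
    (ξ : ℕ → Ω → ℕ → C(ℝ≥0, ℝ))
    (hξ : ∀ n ω j (t : ℝ≥0), ξ n ω j t = ouPath (α j n) (n : ℝ) (fun s => B j s ω) t) :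
    ∀ F : BoundedContinuousFunction (ℕ → C(ℝ≥0, ℝ)) ℝ,
      Tendsto (fun n => ∫ ω, F (ξ n ω) ∂P) atTop (𝓝 (F 0)) :=
  stmt16_general P B hBM α hα ξ hξ
end
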